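/- arXiv:2510.10056 — 4 statements merged into one kernel-verified Lean document; each statement's English description precedes it below -/
import Mathlib

section
/- There exists a constant C > 0 such that for every ε ∈ (0,1) there exists a real polynomial g of degree at most C/ε which is monotone nondecreasing on [−1,1], satisfies g(−1) = 0, and satisfies |max(0,x) − g(x)| ≤ ε for all x ∈ [−1,1]. -/
open Polynomial Real intervalIntegral

noncomputable section
namespace PPAux

/-- formal antiderivative -/
def antider (p : ℝ[X]) : ℝ[X] := p.sum fun n a => C (a / (n+1)) * X ^ (n+1)

lemma derivative_antider (p : ℝ[X]) : derivative (antider p) = p := by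
  unfold antider
  rw [Polynomial.sum_def, map_sum]
  conv_rhs => rw [p.as_sum_support_C_mul_X_pow]
  refine Finset.sum_congr rfl fun n hn => ?_
  rw [derivative_C_mul, derivative_X_pow]
  simp only [Nat.cast_add, Nat.cast_one, Nat.add_sub_cancel]
  rw [← mul_assoc, ← C_mul, div_mul_cancel₀]
  positivity

lemma natDegree_antider_le (p : ℝ[X]) : (antider p).natDegree ≤ p.natDegree + 1 := by
  unfold antider
  refine (Polynomial.natDegree_sum_le _ _).trans ?_
  rw [Finset.fold_max_le]
  refine ⟨Nat.zero_le _, fun n hn => ?_⟩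
  refine (natDegree_C_mul_le _ _).trans ?_
  simp only [natDegree_X_pow]
  exact Nat.succ_le_succ (Polynomial.le_natDegree_of_mem_supp _ hn)

lemma integral_eval (p : ℝ[X]) (a b : ℝ) :
    ∫ v in a..b, p.eval v = (antider p).eval b - (antider p).eval a := by
  have h : ∀ x ∈ Set.uIcc a b, HasDerivAt (fun y => (antider p).eval y) (p.eval x) x := by
    intro x _
    have h := (antider p).hasDerivAt x
    rwa [derivative_antider] at h
  exact intervalIntegral.integral_eq_sub_of_hasDerivAt h
    ((Polynomial.continuous p).intervalIntegrable a b)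

/-- Dirichlet-type polynomial -/
def Dp (j : ℕ) : ℝ[X] := 2 * (∑ k ∈ Finset.range (j+1), Chebyshev.T ℝ k) - 1

lemma one_sub_X_mul_Dp (j : ℕ) :
    (1 - X) * Dp j = Chebyshev.T ℝ j - Chebyshev.T ℝ (j+1) := by
  induction j with
  | zero =>
    have h0 : Dp 0 = 1 := by simp [Dp, Chebyshev.T_zero]; ring
    rw [h0, mul_one]
    have e0 : ((0:ℕ):ℤ) = 0 := rfl
    rw [e0, zero_add, Chebyshev.T_zero, Chebyshev.T_one]
  | succ j ih =>
    have h : Dp (j+1) = Dp j + 2 * Chebyshev.T ℝ ((j:ℤ)+1) := by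
      simp only [Dp, Finset.sum_range_succ]
      push_cast
      ring
    have hrec := Chebyshev.T_add_two ℝ j
    have hj2 : ((j:ℤ)+1)+1 = (j:ℤ)+2 := by ring
    rw [h, mul_add, ih]
    push_cast
    rw [hj2, hrec]
    ring

/-- Fejér-type polynomial: `(Fp n)(cos φ) = (sin (n φ/2) / sin (φ/2))^2`. -/
def Fp (n : ℕ) : ℝ[X] := ∑ j ∈ Finset.range n, Dp j

lemma one_sub_X_mul_Fp (n : ℕ) :
    (1 - X) * Fp n = 1 - Chebyshev.T ℝ n := by
  unfold Fp
  rw [Finset.mul_sum]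
  calc ∑ j ∈ Finset.range n, (1 - X) * Dp j
      = ∑ j ∈ Finset.range n, (Chebyshev.T ℝ j - Chebyshev.T ℝ (j+1)) := by
        exact Finset.sum_congr rfl fun j _ => one_sub_X_mul_Dp j
    _ = Chebyshev.T ℝ 0 - Chebyshev.T ℝ n := by
        have h2 := Finset.sum_range_sub' (f := fun j : ℕ => Chebyshev.T ℝ j) n
        simp only [Nat.cast_add, Nat.cast_one] at h2 ⊢
        exact h2
    _ = 1 - Chebyshev.T ℝ n := by rw [Chebyshev.T_zero]

lemma Fp_eval_one (n : ℕ) : (Fp n).eval 1 = (n : ℝ)^2 := by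
  have hT : ∀ k : ℕ, (Chebyshev.T ℝ k).eval 1 = 1 := by
    intro k
    have := Chebyshev.T_real_cos 0 k
    simpa using this
  have hD : ∀ j : ℕ, (Dp j).eval 1 = 2*(j:ℝ) + 1 := by
    intro j
    simp only [Dp, eval_sub, eval_mul, eval_ofNat, eval_one, eval_finset_sum]
    rw [Finset.sum_congr rfl fun k _ => hT k]
    simp
    ring
  unfold Fp
  rw [eval_finset_sum]
  rw [Finset.sum_congr rfl fun j _ => hD j]
  induction n with
  | zero => simp
  | succ m ihm => rw [Finset.sum_range_succ, ihm]; push_cast; ring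


lemma abs_sin_nat_mul_le (n : ℕ) (t : ℝ) : |sin ((n:ℝ) * t)| ≤ n * |sin t| := by
  induction n with
  | zero => simp
  | succ m ih =>
    have : ((m:ℝ)+1) * t = (m:ℝ)*t + t := by ring
    push_cast
    rw [this, sin_add]
    calc |sin ((m:ℝ)*t) * cos t + cos ((m:ℝ)*t) * sin t|
        ≤ |sin ((m:ℝ)*t) * cos t| + |cos ((m:ℝ)*t) * sin t| := abs_add_le _ _
      _ ≤ |sin ((m:ℝ)*t)| * 1 + 1 * |sin t| := by
          rw [abs_mul, abs_mul]
          gcongr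
          · exact abs_cos_le_one t
          · exact abs_cos_le_one _
      _ ≤ (m:ℝ) * |sin t| + 1 * |sin t| := by
          rw [mul_one]
          gcongr
      _ = ((m:ℝ)+1) * |sin t| := by ring

lemma Fp_eval_cos (n : ℕ) {φ : ℝ} (h : cos φ ≠ 1) :
    (Fp n).eval (cos φ) = sin ((n:ℝ) * (φ/2))^2 / sin (φ/2)^2 := by
  have key := congrArg (Polynomial.eval (cos φ)) (one_sub_X_mul_Fp n)
  simp only [eval_mul, eval_sub, eval_one, eval_X, Chebyshev.T_real_cos] at key
  push_cast at key
  have h1 : (1 - cos φ) = 2 * sin (φ/2)^2 := by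
    rw [sin_sq_eq_half_sub, show 2*(φ/2)=φ by ring]; ring
  have h2 : (1 - cos ((n:ℝ) * φ)) = 2 * sin ((n:ℝ)*(φ/2))^2 := by
    rw [sin_sq_eq_half_sub, show 2*((n:ℝ)*(φ/2)) = (n:ℝ)*φ by ring]; ring
  have hs : sin (φ/2)^2 ≠ 0 := by
    intro hs
    rw [hs, mul_zero] at h1
    exact h (by linarith)
  rw [eq_div_iff hs]
  linear_combination (1/2) * key - (Polynomial.eval (cos φ) (Fp n)/2) * h1 + (1/2) * h2

/-- The kernel polynomial. -/
def Pq (n : ℕ) : ℝ[X] := (Fp n).comp (C 1 - C ((8:ℝ)⁻¹) * X^2)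
def Kp (n : ℕ) : ℝ[X] := (Pq n)^2

lemma K_eval (n : ℕ) (v : ℝ) : (Kp n).eval v = ((Fp n).eval (1 - v^2/8))^2 := by
  unfold Kp Pq
  rw [eval_pow, eval_comp]
  have h : Polynomial.eval v (C 1 - C ((8:ℝ)⁻¹) * X^2) = 1 - v^2/8 := by
    simp
    ring
  rw [h]

lemma K_nonneg (n : ℕ) (v : ℝ) : 0 ≤ (Kp n).eval v := by
  rw [K_eval]; positivity

lemma F_eval_repr (n : ℕ) {v : ℝ} (h0 : v ≠ 0) (hv : v^2 ≤ 4) :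
    ∃ φ : ℝ, 0 < φ ∧ φ ≤ π ∧ 0 < sin (φ/2) ∧ sin (φ/2) = |v|/4 ∧
      (Fp n).eval (1 - v^2/8) = sin ((n:ℝ) * (φ/2))^2 * 16 / v^2 := by
  have hv2 : (0:ℝ) < v^2 := by positivity
  have hy1 : (1:ℝ) - v^2/8 ≤ 1 := by nlinarith
  have hy2 : (-1:ℝ) ≤ 1 - v^2/8 := by nlinarith
  set φ := arccos (1 - v^2/8) with hφ
  have hcos : cos φ = 1 - v^2/8 := cos_arccos hy2 hy1
  have hφ0 : 0 ≤ φ := arccos_nonneg _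
  have hφπ : φ ≤ π := arccos_le_pi _
  have hcosne : cos φ ≠ 1 := by rw [hcos]; intro hc; nlinarith
  have hφpos : 0 < φ := by
    rcases lt_or_eq_of_le hφ0 with h | h
    · exact h
    · exfalso; apply hcosne; rw [← h]; simp
  have hs2 : sin (φ/2)^2 = v^2/16 := by
    rw [sin_sq_eq_half_sub, show 2*(φ/2) = φ by ring, hcos]; ring
  have hsposnn : 0 ≤ sin (φ/2) := sin_nonneg_of_nonneg_of_le_pi (by linarith) (by linarith)
  have hspos : 0 < sin (φ/2) := by
    rcases lt_or_eq_of_le hsposnn with h | h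
    · exact h
    · exfalso; nlinarith [hs2]
  have hseq : sin (φ/2) = |v|/4 := by
    have h5 : sin (φ/2) = Real.sqrt (v^2/16) := by
      rw [← hs2, Real.sqrt_sq hsposnn]
    rw [h5, show v^2/16 = (|v|/4)^2 by rw [div_pow, sq_abs]; norm_num,
      Real.sqrt_sq (by positivity)]
  refine ⟨φ, hφpos, hφπ, hspos, hseq, ?_⟩
  rw [← hcos, Fp_eval_cos n hcosne, hs2]
  field_simp

lemma F_nonneg (n : ℕ) {v : ℝ} (hv : v^2 ≤ 4) : 0 ≤ (Fp n).eval (1 - v^2/8) := by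
  rcases eq_or_ne v 0 with h0 | h0
  · subst h0
    rw [show (1:ℝ) - 0^2/8 = 1 by norm_num, Fp_eval_one]
    positivity
  · obtain ⟨φ, _, _, hsp, hse, hF⟩ := F_eval_repr n h0 hv
    rw [hF]
    have : (0:ℝ) < v^2 := by positivity
    positivity

lemma K_le_sq (n : ℕ) {v : ℝ} (hv : v^2 ≤ 4) : (Kp n).eval v ≤ (n:ℝ)^4 := by
  rw [K_eval]
  have hF : (Fp n).eval (1 - v^2/8) ≤ (n:ℝ)^2 := by
    rcases eq_or_ne v 0 with h0 | h0
    · subst h0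
      rw [show (1:ℝ) - 0^2/8 = 1 by norm_num, Fp_eval_one]
    · obtain ⟨φ, hφ0, hφπ, hsp, hse, hF⟩ := F_eval_repr n h0 hv
      rw [hF]
      have hv2 : (0:ℝ) < v^2 := by positivity
      have hsin := abs_sin_nat_mul_le n (φ/2)
      have h1 : sin ((n:ℝ)*(φ/2))^2 ≤ ((n:ℝ) * |sin (φ/2)|)^2 := by
        rw [← sq_abs (sin ((n:ℝ)*(φ/2)))]
        exact pow_le_pow_left₀ (abs_nonneg _) hsin 2
      have h2 : ((n:ℝ) * |sin (φ/2)|)^2 = (n:ℝ)^2 * (v^2/16) := by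
        rw [mul_pow, sq_abs, hse, div_pow, sq_abs]
        norm_num
      calc sin ((n:ℝ)*(φ/2))^2 * 16 / v^2 ≤ ((n:ℝ)^2 * (v^2/16)) * 16 / v^2 := by
            rw [← h2]; gcongr
        _ = (n:ℝ)^2 := by field_simp
  have hF0 := F_nonneg n hv
  calc ((Fp n).eval (1 - v^2/8))^2 ≤ ((n:ℝ)^2)^2 := pow_le_pow_left₀ hF0 hF 2
    _ = (n:ℝ)^4 := by ring

lemma K_le_inv (n : ℕ) {v : ℝ} (hv : v^2 ≤ 4) (h0 : v ≠ 0) :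
    (Kp n).eval v ≤ 256 / v^4 := by
  rw [K_eval]
  obtain ⟨φ, hφ0, hφπ, hsp, hse, hF⟩ := F_eval_repr n h0 hv
  have hv2 : (0:ℝ) < v^2 := by positivity
  have hF' : (Fp n).eval (1 - v^2/8) ≤ 16 / v^2 := by
    rw [hF]
    have h1 : sin ((n:ℝ)*(φ/2))^2 ≤ 1 := by
      rw [← sq_abs]
      nlinarith [abs_sin_le_one ((n:ℝ)*(φ/2)), abs_nonneg (sin ((n:ℝ)*(φ/2)))]
    calc sin ((n:ℝ)*(φ/2))^2 * 16 / v^2 ≤ 1 * 16 / v^2 := by gcongr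
      _ = 16 / v^2 := by ring
  have hF0 := F_nonneg n hv
  have hgoal : ((Fp n).eval (1 - v^2/8))^2 ≤ (16/v^2)^2 := pow_le_pow_left₀ hF0 hF' 2
  have : (16/v^2)^2 = 256 / v^4 := by
    rw [div_pow]
    norm_num
    ring_nf
  linarith [hgoal, this.symm.le, this.le]

lemma K_ge (n : ℕ) (hn : 1 ≤ n) {v : ℝ} (hv : |v| ≤ 2/(n:ℝ)) :
    ((2/π)^2*(n:ℝ)^2)^2 ≤ (Kp n).eval v := by
  have hnR : (1:ℝ) ≤ n := by exact_mod_cast hn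
  have hπ := pi_pos
  have h2π : 2/π ≤ 1 := by
    rw [div_le_one hπ]; linarith [pi_gt_three]
  rw [K_eval]
  have hn0 : (0:ℝ) < n := by positivity
  have hv4 : v^2 ≤ 4 := by
    have h1 : |v| ≤ 2 := le_trans hv (by rw [div_le_iff₀ hn0]; nlinarith)
    nlinarith [sq_abs v, abs_nonneg v]
  rcases eq_or_ne v 0 with h0 | h0
  · subst h0
    rw [show (1:ℝ) - 0^2/8 = 1 by norm_num, Fp_eval_one]
    calc ((2/π)^2*(n:ℝ)^2)^2 ≤ (1*(n:ℝ)^2)^2 := by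
          gcongr
          exact pow_le_one₀ (by positivity) h2π
      _ = ((n:ℝ)^2)^2 := by ring
  · obtain ⟨φ, hφ0, hφπ, hsp, hse, hF⟩ := F_eval_repr n h0 hv4
    have hv2 : (0:ℝ) < v^2 := by positivity
    have hvpos : 0 < |v| := abs_pos.mpr h0
    have hhalf : 0 ≤ φ/2 := by linarith
    have hhalf2 : φ/2 ≤ π/2 := by linarith
    have hjordan : φ/2 ≤ (π/2) * sin (φ/2) := by
      have h := Real.mul_le_sin hhalf hhalf2
      calc φ/2 = (π/2) * (2/π * (φ/2)) := by field_simp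
        _ ≤ (π/2) * sin (φ/2) := by gcongr
    have h3 : (n:ℝ) * |v| ≤ 2 := by
      calc (n:ℝ) * |v| ≤ (n:ℝ) * (2/(n:ℝ)) := by gcongr
        _ = 2 := by field_simp
    have hsmall : (n:ℝ) * (φ/2) ≤ π/2 := by
      have h2 : (n:ℝ) * (φ/2) ≤ (n:ℝ) * ((π/2) * (|v|/4)) := by
        rw [← hse]; gcongr
      nlinarith [h3, hπ]
    have hlow : (2/π) * ((n:ℝ) * (φ/2)) ≤ sin ((n:ℝ)*(φ/2)) :=
      Real.mul_le_sin (by positivity) hsmall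
    have hsin_le : sin (φ/2) ≤ φ/2 := Real.sin_le hhalf
    have hkey : (2/π) * (n:ℝ) * (|v|/4) ≤ sin ((n:ℝ)*(φ/2)) := by
      calc (2/π) * (n:ℝ) * (|v|/4) = (2/π) * ((n:ℝ) * sin (φ/2)) := by rw [hse]; ring
        _ ≤ (2/π) * ((n:ℝ) * (φ/2)) := by gcongr
        _ ≤ sin ((n:ℝ)*(φ/2)) := hlow
    have hc0 : (0:ℝ) ≤ 2/π * (n:ℝ) * (|v|/4) := by positivity
    have hsq : (2/π * (n:ℝ) * (|v|/4))^2 ≤ sin ((n:ℝ)*(φ/2))^2 :=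
      sq_le_sq' (by linarith) hkey
    have hFlow : (2/π)^2 * (n:ℝ)^2 ≤ (Fp n).eval (1 - v^2/8) := by
      rw [hF]
      have e1 : ((2/π) * (n:ℝ) * (|v|/4))^2 = (2/π)^2 * (n:ℝ)^2 * (v^2/16) := by
        simp only [mul_pow, div_pow, sq_abs]
        ring
      calc (2/π)^2 * (n:ℝ)^2 = ((2/π) * (n:ℝ) * (|v|/4))^2 * 16 / v^2 := by
            rw [e1]; field_simp
        _ ≤ sin ((n:ℝ)*(φ/2))^2 * 16 / v^2 := by gcongr
    calc ((2/π)^2*(n:ℝ)^2)^2 ≤ ((Fp n).eval (1 - v^2/8))^2 :=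
          pow_le_pow_left₀ (by positivity) hFlow 2
      _ = _ := rfl

lemma K_even (n : ℕ) (v : ℝ) : (Kp n).eval (-v) = (Kp n).eval v := by
  rw [K_eval, K_eval, neg_pow, show ((-1:ℝ))^2 = 1 by norm_num, one_mul]

lemma natDegree_T_le : ∀ k : ℕ, (Chebyshev.T ℝ (k:ℤ)).natDegree ≤ k := by
  intro k
  induction k using Nat.twoStepInduction with
  | zero => simp [Chebyshev.T_zero]
  | one =>
    rw [show ((1:ℕ):ℤ) = 1 from rfl, Chebyshev.T_one]
    simp
  | more k ih1 ih2 =>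
    have h : ((k:ℤ)+2) = (((k+2):ℕ):ℤ) := by push_cast; ring
    rw [← h, Chebyshev.T_add_two]
    refine (natDegree_sub_le _ _).trans ?_
    refine max_le ?_ (le_trans ih1 (by omega))
    refine (natDegree_mul_le).trans ?_
    have h1 : (2 * X : ℝ[X]).natDegree ≤ 1 := by
      refine (natDegree_mul_le).trans ?_
      simp
    have h2 : (Chebyshev.T ℝ ((k:ℤ)+1)).natDegree ≤ k + 1 := by
      have : ((k:ℤ)+1) = (((k+1):ℕ):ℤ) := by push_cast; ring
      rw [this]; exact ih2
    omega

lemma natDegree_Fp_le (n : ℕ) : (Fp n).natDegree ≤ n := by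
  unfold Fp
  refine Polynomial.natDegree_sum_le_of_forall_le _ _ fun j hj => ?_
  unfold Dp
  refine (natDegree_sub_le _ _).trans ?_
  refine max_le ?_ (by simp)
  refine (natDegree_mul_le).trans ?_
  have h2 : (∑ k ∈ Finset.range (j+1), Chebyshev.T ℝ k).natDegree ≤ j := by
    refine Polynomial.natDegree_sum_le_of_forall_le _ _ fun k hk => ?_
    exact (natDegree_T_le k).trans (by simpa [Nat.lt_succ] using hk)
  simp only [natDegree_ofNat, zero_add]
  exact h2.trans (by simp at hj; omega)

lemma natDegree_Kp_le (n : ℕ) : (Kp n).natDegree ≤ 4*n := by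
  unfold Kp
  rw [natDegree_pow]
  have h1 : (Pq n).natDegree ≤ 2*n := by
    unfold Pq
    refine natDegree_comp_le.trans ?_
    have h2 : (C (1:ℝ) - C ((8:ℝ)⁻¹) * X^2).natDegree ≤ 2 := by
      refine (natDegree_sub_le _ _).trans ?_
      refine max_le (by simp) ?_
      refine (natDegree_mul_le).trans (by simp)
    calc (Fp n).natDegree * (C (1:ℝ) - C ((8:ℝ)⁻¹) * X^2).natDegree
        ≤ n * 2 := Nat.mul_le_mul (natDegree_Fp_le n) h2
      _ = 2*n := by ring
  omega

section Main
variable (n : ℕ)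

def Qp (n : ℕ) : ℝ[X] := antider (Kp n)
def Rp (n : ℕ) : ℝ[X] := antider (X * Kp n)
def Gp (n : ℕ) : ℝ[X] :=
  X * (Qp n - C ((Qp n).eval (-2))) - (Rp n - C ((Rp n).eval (-2)))

lemma contK : Continuous fun v : ℝ => (Kp n).eval v := by
  exact Polynomial.continuous _

lemma intK (a b : ℝ) : IntervalIntegrable (fun v => (Kp n).eval v)
    MeasureTheory.volume a b := (contK n).intervalIntegrable a b

lemma Gp_eval (t : ℝ) :
    (Gp n).eval t = ∫ v in (-2:ℝ)..t, (t - v) * (Kp n).eval v := by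
  have h1 : (∫ v in (-2:ℝ)..t, (t - v) * (Kp n).eval v)
      = (∫ v in (-2:ℝ)..t, t * (Kp n).eval v) - ∫ v in (-2:ℝ)..t, v * (Kp n).eval v := by
    rw [← intervalIntegral.integral_sub]
    · congr 1; ext v; ring
    · exact ((continuous_const.mul (contK n)).intervalIntegrable _ _)
    · exact ((continuous_id.mul (contK n)).intervalIntegrable _ _)
  have h2 : (∫ v in (-2:ℝ)..t, t * (Kp n).eval v) = t * ((Qp n).eval t - (Qp n).eval (-2)) := by
    rw [intervalIntegral.integral_const_mul, integral_eval]
    rfl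
  have h3 : (∫ v in (-2:ℝ)..t, v * (Kp n).eval v) = (Rp n).eval t - (Rp n).eval (-2) := by
    have : (∫ v in (-2:ℝ)..t, v * (Kp n).eval v) = ∫ v in (-2:ℝ)..t, (X * Kp n).eval v := by
      congr 1; ext v; simp
    rw [this, integral_eval]
    rfl
  rw [h1, h2, h3]
  simp only [Gp, eval_sub, eval_mul, eval_X, eval_C]
  try ring

lemma derivative_Gp : derivative (Gp n) = Qp n - C ((Qp n).eval (-2)) := by
  unfold Gp
  rw [derivative_sub, derivative_mul, derivative_X, derivative_sub, derivative_sub,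
    derivative_C, derivative_C]
  have h1 : derivative (Qp n) = Kp n := derivative_antider _
  have h2 : derivative (Rp n) = X * Kp n := derivative_antider _
  rw [h1, h2]
  ring

end Main

lemma Merr (n : ℕ) {x : ℝ} (hx : x ∈ Set.Icc (-1:ℝ) 1) :
    |(Gp n).eval x - (∫ v in (-2:ℝ)..2, (Kp n).eval v) * max 0 x|
      ≤ ∫ v in (-2:ℝ)..2, |v| * (Kp n).eval v := by
  obtain ⟨hx1, hx2⟩ := hx
  have hcmax : Continuous fun v : ℝ => max 0 (x - v) * (Kp n).eval v :=
    (continuous_const.max (continuous_const.sub continuous_id)).mul (contK n)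
  have e_left : (∫ v in (-2:ℝ)..x, max 0 (x - v) * (Kp n).eval v)
      = ∫ v in (-2:ℝ)..x, (x - v) * (Kp n).eval v := by
    refine intervalIntegral.integral_congr fun v hv => ?_
    rw [Set.uIcc_of_le (by linarith : (-2:ℝ) ≤ x)] at hv
    rw [max_eq_right (by linarith [hv.2] : (0:ℝ) ≤ x - v)]
  have e_right : (∫ v in x..(2:ℝ), max 0 (x - v) * (Kp n).eval v) = 0 := by
    have : (∫ v in x..(2:ℝ), max 0 (x - v) * (Kp n).eval v)
        = ∫ v in x..(2:ℝ), (0:ℝ) := by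
      refine intervalIntegral.integral_congr fun v hv => ?_
      rw [Set.uIcc_of_le (by linarith : x ≤ (2:ℝ))] at hv
      rw [max_eq_left (by linarith [hv.1] : x - v ≤ 0), zero_mul]
    rw [this, intervalIntegral.integral_zero]
  have e1 : (Gp n).eval x = ∫ v in (-2:ℝ)..2, max 0 (x - v) * (Kp n).eval v := by
    rw [← intervalIntegral.integral_add_adjacent_intervals
      (hcmax.intervalIntegrable (-2) x) (hcmax.intervalIntegrable x 2),
      e_left, e_right, add_zero, Gp_eval]
  have e2 : (∫ v in (-2:ℝ)..2, (Kp n).eval v) * max 0 x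
      = ∫ v in (-2:ℝ)..2, max 0 x * (Kp n).eval v := by
    rw [intervalIntegral.integral_const_mul]
    ring
  rw [e1, e2, ← intervalIntegral.integral_sub (hcmax.intervalIntegrable _ _)
    (g := fun v => max 0 x * (Kp n).eval v)
    ((continuous_const.mul (contK n)).intervalIntegrable _ _)]
  have habs := intervalIntegral.abs_integral_le_integral_abs
    (f := fun v => max 0 (x - v) * (Kp n).eval v - max 0 x * (Kp n).eval v)
    (a := (-2:ℝ)) (b := 2) (μ := MeasureTheory.volume) (by norm_num)
  refine habs.trans ?_
  refine intervalIntegral.integral_mono_on (by norm_num)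
    (Continuous.intervalIntegrable (by fun_prop) _ _)
    (Continuous.intervalIntegrable ((continuous_abs.mul (contK n))) _ _)
    fun v hv => ?_
  show |max 0 (x - v) * (Kp n).eval v - max 0 x * (Kp n).eval v| ≤ |v| * (Kp n).eval v
  have hK := K_nonneg n v
  have hfac : max 0 (x - v) * (Kp n).eval v - max 0 x * (Kp n).eval v
      = (max 0 (x - v) - max 0 x) * (Kp n).eval v := by ring
  rw [hfac, abs_mul, abs_of_nonneg hK]
  have hmax : |max 0 (x - v) - max 0 x| ≤ |v| := by
    have h := abs_max_sub_max_le_abs (x - v) x 0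
    rw [max_comm (x - v) 0, max_comm x 0] at h
    calc |max 0 (x - v) - max 0 x| ≤ |x - v - x| := h
      _ = |v| := by rw [show x - v - x = -v by ring, abs_neg]
  exact mul_le_mul_of_nonneg_right hmax hK

lemma M_le (n : ℕ) (hn : 2 ≤ n) :
    (∫ v in (-2:ℝ)..2, |v| * (Kp n).eval v) ≤ 32 * (n:ℝ)^2 := by
  have hnR : (2:ℝ) ≤ n := by exact_mod_cast hn
  have hn0 : (0:ℝ) < n := by linarith
  set a : ℝ := 4 / n with ha
  have ha0 : 0 < a := by positivity
  have ha2 : a ≤ 2 := by rw [ha, div_le_iff₀ hn0]; linarith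
  have hcont : Continuous fun v : ℝ => |v| * (Kp n).eval v :=
    continuous_abs.mul (contK n)
  have key02 : (∫ v in (0:ℝ)..2, |v| * (Kp n).eval v) ≤ 16 * (n:ℝ)^2 := by
    have hsplit : (∫ v in (0:ℝ)..2, |v| * (Kp n).eval v)
        = (∫ v in (0:ℝ)..a, |v| * (Kp n).eval v) + ∫ v in a..2, |v| * (Kp n).eval v :=
      (intervalIntegral.integral_add_adjacent_intervals
        (hcont.intervalIntegrable _ _) (hcont.intervalIntegrable _ _)).symm
    have h1 : (∫ v in (0:ℝ)..a, |v| * (Kp n).eval v) ≤ 8 * (n:ℝ)^2 := by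
      have hle : (∫ v in (0:ℝ)..a, |v| * (Kp n).eval v)
          ≤ ∫ v in (0:ℝ)..a, (n:ℝ)^4 * v := by
        refine intervalIntegral.integral_mono_on ha0.le
          (hcont.intervalIntegrable _ _)
          ((continuous_const.mul continuous_id).intervalIntegrable _ _) fun v hv => ?_
        obtain ⟨hv1, hv2⟩ := hv
        have hva : v ≤ 2 := le_trans hv2 ha2
        have hK := K_le_sq n (v := v) (by nlinarith)
        rw [abs_of_nonneg hv1]
        calc v * (Kp n).eval v ≤ v * (n:ℝ)^4 := mul_le_mul_of_nonneg_left hK hv1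
          _ = (n:ℝ)^4 * v := by ring
      have hval : (∫ v in (0:ℝ)..a, (n:ℝ)^4 * v) = 8 * (n:ℝ)^2 := by
        rw [intervalIntegral.integral_const_mul, integral_id, ha]
        field_simp
        ring
      linarith
    have h2 : (∫ v in a..2, |v| * (Kp n).eval v) ≤ 8 * (n:ℝ)^2 := by
      have hcontOn : ContinuousOn (fun v : ℝ => 256 * (v^3)⁻¹) (Set.uIcc a 2) := by
        refine continuousOn_const.mul (ContinuousOn.inv₀ ((continuous_pow 3).continuousOn) ?_)
        intro v hv
        rw [Set.uIcc_of_le ha2] at hv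
        exact pow_ne_zero 3 (ne_of_gt (lt_of_lt_of_le ha0 hv.1))
      have hint3 : IntervalIntegrable (fun v : ℝ => 256 * (v^3)⁻¹)
          MeasureTheory.volume a 2 := hcontOn.intervalIntegrable
      have hle : (∫ v in a..2, |v| * (Kp n).eval v) ≤ ∫ v in a..2, 256 * (v^3)⁻¹ := by
        refine intervalIntegral.integral_mono_on ha2
          (hcont.intervalIntegrable _ _) hint3 fun v hv => ?_
        obtain ⟨hv1, hv2⟩ := hv
        have hv0 : 0 < v := lt_of_lt_of_le ha0 hv1
        have hK := K_le_inv n (v := v) (by nlinarith) (ne_of_gt hv0)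
        rw [abs_of_nonneg hv0.le]
        calc v * (Kp n).eval v ≤ v * (256 / v^4) := mul_le_mul_of_nonneg_left hK hv0.le
          _ = 256 * (v^3)⁻¹ := by field_simp
      have hFTC : (∫ v in a..2, 256 * (v^3)⁻¹)
          = (-128) * ((2:ℝ)^2)⁻¹ - ((-128) * (a^2)⁻¹) := by
        refine intervalIntegral.integral_eq_sub_of_hasDerivAt
          (f := fun y : ℝ => -128 * (y^2)⁻¹) (fun v hv => ?_) hint3
        rw [Set.uIcc_of_le ha2] at hv
        have hv0 : 0 < v := lt_of_lt_of_le ha0 hv.1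
        have hD := (hasDerivAt_pow 2 v).inv (pow_ne_zero 2 (ne_of_gt hv0))
        have hD2 := hD.const_mul (-128 : ℝ)
        convert hD2 using 1
        · rfl
        · rfl
        field_simp
        ring
      have hval : (∫ v in a..2, 256 * (v^3)⁻¹) ≤ 8 * (n:ℝ)^2 := by
        rw [hFTC, ha]
        have h4 : ((4:ℝ)/n)^2 = 16 / (n:ℝ)^2 := by rw [div_pow]; norm_num
        rw [h4]
        have : (-128:ℝ) * ((2:ℝ)^2)⁻¹ - ((-128) * (16 / (n:ℝ)^2)⁻¹) = 8*(n:ℝ)^2 - 32 := by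
          field_simp
          ring
        rw [this]
        nlinarith
      linarith
    linarith [hsplit, h1, h2]
  have hrefl : (∫ v in (-2:ℝ)..0, |v| * (Kp n).eval v)
      = ∫ v in (0:ℝ)..2, |v| * (Kp n).eval v := by
    have h := intervalIntegral.integral_comp_neg (a := (0:ℝ)) (b := 2)
      (fun v => |v| * (Kp n).eval v)
    simp only [abs_neg, K_even, neg_zero] at h
    exact h.symm
  have hsplit : (∫ v in (-2:ℝ)..2, |v| * (Kp n).eval v)
      = (∫ v in (-2:ℝ)..0, |v| * (Kp n).eval v) + ∫ v in (0:ℝ)..2, |v| * (Kp n).eval v :=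
    (intervalIntegral.integral_add_adjacent_intervals
      (hcont.intervalIntegrable _ _) (hcont.intervalIntegrable _ _)).symm
  rw [hsplit, hrefl]
  linarith

lemma M_nonneg (n : ℕ) : 0 ≤ ∫ v in (-2:ℝ)..2, |v| * (Kp n).eval v := by
  refine intervalIntegral.integral_nonneg (by norm_num) fun u hu => ?_
  exact mul_nonneg (abs_nonneg _) (K_nonneg n u)

lemma A_ge (n : ℕ) (hn : 2 ≤ n) :
    64 * (n:ℝ)^3 / π^4 ≤ ∫ v in (-2:ℝ)..2, (Kp n).eval v := by
  have hnR : (2:ℝ) ≤ n := by exact_mod_cast hn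
  have hn0 : (0:ℝ) < n := by linarith
  have hπ := pi_pos
  set b : ℝ := 2 / n with hb
  have hb0 : 0 < b := by positivity
  have hb1 : b ≤ 1 := by rw [hb, div_le_one hn0]; linarith
  have h1 : (∫ v in (-2:ℝ)..2, (Kp n).eval v)
      = (∫ v in (-2:ℝ)..(-b), (Kp n).eval v) + ((∫ v in (-b)..b, (Kp n).eval v)
          + ∫ v in b..(2:ℝ), (Kp n).eval v) := by
    rw [intervalIntegral.integral_add_adjacent_intervals (intK n _ _) (intK n _ _),
      intervalIntegral.integral_add_adjacent_intervals (intK n _ _) (intK n _ _)]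
  have h2 : 0 ≤ ∫ v in (-2:ℝ)..(-b), (Kp n).eval v :=
    intervalIntegral.integral_nonneg (by linarith) fun u _ => K_nonneg n u
  have h3 : 0 ≤ ∫ v in b..(2:ℝ), (Kp n).eval v :=
    intervalIntegral.integral_nonneg (by linarith) fun u _ => K_nonneg n u
  have h4 : 64 * (n:ℝ)^3 / π^4 ≤ ∫ v in (-b)..b, (Kp n).eval v := by
    have hmono : (∫ v in (-b)..b, (((2:ℝ)/π)^2*(n:ℝ)^2)^2)
        ≤ ∫ v in (-b)..b, (Kp n).eval v := by
      refine intervalIntegral.integral_mono_on (by linarith)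
        (intervalIntegrable_const) (intK n _ _) fun v hv => ?_
      refine K_ge n (by omega) ?_
      rw [abs_le]
      exact ⟨hv.1, hv.2⟩
    have hval : (∫ v in (-b)..b, (((2:ℝ)/π)^2*(n:ℝ)^2)^2)
        = 64 * (n:ℝ)^3 / π^4 := by
      rw [intervalIntegral.integral_const, smul_eq_mul, hb]
      field_simp
      ring
    linarith
  linarith

lemma A_pos (n : ℕ) (hn : 2 ≤ n) : 0 < ∫ v in (-2:ℝ)..2, (Kp n).eval v := by
  have h := A_ge n hn
  have hπ := pi_pos
  have hn0 : (0:ℝ) < n := by positivity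
  have : (0:ℝ) < 64 * (n:ℝ)^3 / π^4 := by positivity
  linarith

theorem main_result :
    ∃ C : ℝ, 0 < C ∧ ∀ ε : ℝ, 0 < ε → ε < 1 →
      ∃ g : Polynomial ℝ,
        (g.natDegree : ℝ) ≤ C / ε ∧
        MonotoneOn (fun x : ℝ => g.eval x) (Set.Icc (-1 : ℝ) 1) ∧
        g.eval (-1 : ℝ) = 0 ∧
        ∀ x ∈ Set.Icc (-1 : ℝ) 1, |max 0 x - g.eval x| ≤ ε := by
  refine ⟨400, by norm_num, fun ε hε hε1 => ?_⟩
  set n : ℕ := ⌈(98:ℝ)/ε⌉₊ with hn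
  have hn98 : (98:ℝ)/ε ≤ n := Nat.le_ceil _
  have h98 : (98:ℝ) ≤ 98/ε := by
    rw [le_div_iff₀ hε]; nlinarith
  have hn2 : 2 ≤ n := by
    have : (2:ℝ) ≤ n := by linarith
    exact_mod_cast this
  have hn0 : (0:ℝ) < n := by
    have : (0:ℝ) < 2 := by norm_num
    have h2 : (2:ℝ) ≤ n := by exact_mod_cast hn2
    linarith
  have hnle : (n:ℝ) ≤ 98/ε + 1 := by
    exact_mod_cast (Nat.ceil_lt_add_one (by positivity : (0:ℝ) ≤ 98/ε)).le
  set A : ℝ := ∫ v in (-2:ℝ)..2, (Kp n).eval v with hA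
  set M : ℝ := ∫ v in (-2:ℝ)..2, |v| * (Kp n).eval v with hM
  have hApos : 0 < A := A_pos n hn2
  have hAge := A_ge n hn2
  have hMle := M_le n hn2
  have hM0 := M_nonneg n
  have hπ := pi_pos
  have hπ4 : π^4 ≤ 98 := by
    have h1 : π^2 ≤ 9.87 := by nlinarith [Real.pi_lt_d6, pi_pos]
    nlinarith [h1, sq_nonneg π]
  refine ⟨C A⁻¹ * (Gp n - C ((Gp n).eval (-1))), ?_, ?_, ?_, ?_⟩
  · -- degree bound
    have hd : (C A⁻¹ * (Gp n - C ((Gp n).eval (-1)))).natDegree ≤ 4*n + 2 := by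
      refine (natDegree_C_mul_le _ _).trans ?_
      refine (natDegree_sub_le _ _).trans ?_
      refine max_le ?_ (by simp)
      unfold Gp
      refine (natDegree_sub_le _ _).trans (max_le ?_ ?_)
      · refine natDegree_mul_le.trans ?_
        have hq : (Qp n - C ((Qp n).eval (-2))).natDegree ≤ 4*n + 1 := by
          refine (natDegree_sub_le _ _).trans (max_le ?_ (by simp))
          exact (natDegree_antider_le _).trans (by have := natDegree_Kp_le n; omega)
        simp only [natDegree_X]
        omega
      · refine (natDegree_sub_le _ _).trans (max_le ?_ (by simp))
        refine (natDegree_antider_le _).trans ?_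
        have h1 : (X * Kp n).natDegree ≤ 1 + (4*n) := by
          refine natDegree_mul_le.trans ?_
          have := natDegree_Kp_le n
          simp only [natDegree_X]
          omega
        omega
    have hd' : ((C A⁻¹ * (Gp n - C ((Gp n).eval (-1)))).natDegree : ℝ) ≤ 4*(n:ℝ) + 2 := by
      exact_mod_cast hd
    have hfin : 4*(n:ℝ) + 2 ≤ 400/ε := by
      have : 4*(n:ℝ) + 2 ≤ 4*(98/ε + 1) + 2 := by linarith
      have h8 : (6:ℝ) ≤ 8/ε := by rw [le_div_iff₀ hε]; nlinarith
      have hexp : 4*(98/ε + 1) + 2 = 392/ε + 6 := by ring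
      have : 4*(n:ℝ) + 2 ≤ 392/ε + 6 := by linarith
      have h400 : (392:ℝ)/ε + 8/ε = 400/ε := by ring
      linarith
    linarith
  · -- monotone
    refine monotoneOn_of_deriv_nonneg (convex_Icc _ _)
      ((Polynomial.continuous _).continuousOn)
      (((Polynomial.differentiable _).differentiableOn)) fun x hx => ?_
    rw [interior_Icc] at hx
    rw [Polynomial.deriv]
    have hder : derivative (C A⁻¹ * (Gp n - C ((Gp n).eval (-1))))
        = C A⁻¹ * (Qp n - C ((Qp n).eval (-2))) := by
      rw [derivative_C_mul, derivative_sub, derivative_C, sub_zero, derivative_Gp]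
    rw [hder]
    simp only [eval_mul, eval_C, eval_sub]
    have hint : (Qp n).eval x - (Qp n).eval (-2) = ∫ v in (-2:ℝ)..x, (Kp n).eval v :=
      (integral_eval (Kp n) (-2) x).symm
    rw [hint]
    have : 0 ≤ ∫ v in (-2:ℝ)..x, (Kp n).eval v :=
      intervalIntegral.integral_nonneg (by linarith [hx.1]) fun u _ => K_nonneg n u
    positivity
  · simp
  · -- error bound
    intro x hx
    have hM1 := Merr n hx
    have hM2 := Merr n (x := -1) (by constructor <;> norm_num)
    rw [show max (0:ℝ) (-1) = 0 by norm_num, mul_zero, sub_zero] at hM2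
    rw [← hM] at hM1 hM2
    have hMle' : M ≤ 32*(n:ℝ)^2 := hMle
    have hM0' : (0:ℝ) ≤ M := hM0
    have hAge' : 64 * (n:ℝ)^3 / π^4 ≤ A := hAge
    simp only [eval_mul, eval_C, eval_sub]
    have hrw : max 0 x - A⁻¹ * ((Gp n).eval x - (Gp n).eval (-1))
        = A⁻¹ * ((A * max 0 x - (Gp n).eval x) + (Gp n).eval (-1)) := by
      field_simp
      ring
    rw [hrw, abs_mul, abs_of_pos (inv_pos.mpr hApos)]
    have htri : |(A * max 0 x - (Gp n).eval x) + (Gp n).eval (-1)|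
        ≤ M + M := by
      have h1 : |A * max 0 x - (Gp n).eval x| ≤ M := by
        rw [abs_sub_comm]; exact hM1
      calc |(A * max 0 x - (Gp n).eval x) + (Gp n).eval (-1)|
          ≤ |A * max 0 x - (Gp n).eval x| + |(Gp n).eval (-1)| := abs_add_le _ _
        _ ≤ M + M := add_le_add h1 hM2
    have hfinal : A⁻¹ * (M + M) ≤ ε := by
      have hL : (0:ℝ) < 64 * (n:ℝ)^3 / π^4 := by positivity
      have hAinv : A⁻¹ ≤ (64 * (n:ℝ)^3 / π^4)⁻¹ := by
        exact inv_anti₀ hL hAge'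
      have hinvL : (64 * (n:ℝ)^3 / π^4)⁻¹ = π^4 / (64 * (n:ℝ)^3) := by
        rw [inv_div]
      have hc1 : A⁻¹ * (M + M) ≤ (π^4 / (64 * (n:ℝ)^3)) * (64 * (n:ℝ)^2) := by
        calc A⁻¹ * (M + M) ≤ (π^4 / (64 * (n:ℝ)^3)) * (M + M) := by
              rw [← hinvL]
              exact mul_le_mul_of_nonneg_right hAinv (by linarith [hM0'])
          _ ≤ (π^4 / (64 * (n:ℝ)^3)) * (64 * (n:ℝ)^2) := by
              refine mul_le_mul_of_nonneg_left (by linarith) (by positivity)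
      have hc2 : (π^4 / (64 * (n:ℝ)^3)) * (64 * (n:ℝ)^2) = π^4 / n := by
        field_simp
      have hc3 : π^4 / (n:ℝ) ≤ 98 / (n:ℝ) := by gcongr
      have hc4 : (98:ℝ) / n ≤ ε := by
        rw [div_le_iff₀ hn0]
        have := (div_le_iff₀ hε).mp hn98
        linarith [mul_comm ε (n:ℝ) ▸ this]
      linarith [hc1, hc2 ▸ hc1]
    calc A⁻¹ * |(A * max 0 x - (Gp n).eval x) + (Gp n).eval (-1)|
        ≤ A⁻¹ * (M + M) := by
          exact mul_le_mul_of_nonneg_left htri (by positivity)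
      _ ≤ ε := hfinal

end PPAux

/-- There exists a constant `C > 0` such that for every `ε ∈ (0,1)` there exists a
real polynomial `g` of degree at most `C/ε` which is monotone nondecreasing on `[−1,1]`,
satisfies `g(−1) = 0`, and satisfies `|max(0,x) − g(x)| ≤ ε` for all `x ∈ [−1,1]`. -/
theorem polynomial_approximation_of_positive_part :
    ∃ C : ℝ, 0 < C ∧ ∀ ε : ℝ, 0 < ε → ε < 1 →
      ∃ g : Polynomial ℝ,
        (g.natDegree : ℝ) ≤ C / ε ∧
        MonotoneOn (fun x : ℝ => g.eval x) (Set.Icc (-1 : ℝ) 1) ∧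
        g.eval (-1 : ℝ) = 0 ∧
        ∀ x ∈ Set.Icc (-1 : ℝ) 1, |max 0 x - g.eval x| ≤ ε := by
  exact PPAux.main_result
end
end

section
/- Let γ > 0 and let g : ℝ → ℝ be a differentiable bijection with g'(x) > 0 for all x ∈ ℝ, with inverse function g⁻¹ : ℝ → ℝ. Define h : [0,∞) → ℝ by h(u) = (1/γ) ∫₀ᵘ (g⁻¹(z) − z) dz. Then for every x ∈ ℝ with g(x) ≥ 0, the point u = g(x) is the unique global minimizer over u ∈ [0,∞) of the function u ↦ (1/2)(x − u)² + γ h(u). (In the paper's notation, this states that (1 + γ ∂h)⁻¹ = g on this range.) -/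
/-!
Write `φ = g⁻¹`, which is strictly increasing. Since `(x - u)² / 2 = x² / 2 + ∫₀ᵘ (z - x) dz`,
the objective equals `x² / 2 + ∫₀ᵘ (φ z - x) dz`. As `x = φ (g x)`, its excess over the value
at `g x` is `∫_{g x}^u (φ z - φ (g x)) dz`, whose integrand has the sign of `u - g x` strictly
between `g x` and `u`; hence the excess is positive for `u ≠ g x`.
-/

open intervalIntegral

theorem half_sq_sub_add_integral_sub_id {φ : ℝ → ℝ} (hφ : Monotone φ) (x u : ℝ) :
    (1 / 2) * (x - u) ^ 2 + ∫ z in (0 : ℝ)..u, (φ z - z) =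
      x ^ 2 / 2 + ∫ z in (0 : ℝ)..u, (φ z - x) := by
  have hφi : IntervalIntegrable φ MeasureTheory.volume 0 u := hφ.intervalIntegrable
  have hid : IntervalIntegrable (fun z : ℝ => z) MeasureTheory.volume 0 u :=
    continuous_id.intervalIntegrable _ _
  rw [integral_sub hφi hid, integral_sub hφi intervalIntegrable_const, integral_id,
    integral_const]
  simp only [smul_eq_mul]
  ring

theorem StrictMono.integral_sub_apply_pos {φ : ℝ → ℝ} (hφ : StrictMono φ) {v u : ℝ}
    (h : u ≠ v) :
    0 < ∫ z in v..u, (φ z - φ v) := by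
  have hφi : ∀ a b, IntervalIntegrable φ MeasureTheory.volume a b :=
    fun _ _ => hφ.monotone.intervalIntegrable
  rcases h.lt_or_gt with hlt | hgt
  · have hpos : 0 < ∫ z in u..v, (φ v - φ z) :=
      intervalIntegral_pos_of_pos_on (intervalIntegrable_const.sub (hφi u v))
        (fun z hz => sub_pos.mpr (hφ hz.2)) hlt
    calc 0 < ∫ z in u..v, (φ v - φ z) := hpos
      _ = ∫ z in v..u, (φ z - φ v) := by
        rw [integral_symm, ← integral_neg]
        simp only [neg_sub]
  · exact intervalIntegral_pos_of_pos_on ((hφi v u).sub intervalIntegrable_const)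
      (fun z hz => sub_pos.mpr (hφ hz.1)) hgt

theorem proximal_operator_construction_scalar_general
    (γ : ℝ) (hγ : 0 < γ)
    (g : ℝ → ℝ) (hg' : ∀ x : ℝ, 0 < deriv g x)
    (ginv : ℝ → ℝ)
    (hrinv : Function.RightInverse ginv g)
    (h : ℝ → ℝ)
    (hh : ∀ u : ℝ, 0 ≤ u → h u = (1 / γ) * ∫ z in (0:ℝ)..u, (ginv z - z))
    (x : ℝ) (hx : 0 ≤ g x) :
    (∀ u : ℝ, 0 ≤ u →
        (1 / 2) * (x - g x) ^ 2 + γ * h (g x) ≤ (1 / 2) * (x - u) ^ 2 + γ * h u) ∧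
    (∀ u : ℝ, 0 ≤ u → u ≠ g x →
        (1 / 2) * (x - g x) ^ 2 + γ * h (g x) < (1 / 2) * (x - u) ^ 2 + γ * h u) := by
  have hg : StrictMono g := strictMono_of_deriv_pos hg'
  have hginv : StrictMono ginv := (hg.orderIsoOfRightInverse g ginv hrinv).symm.strictMono
  have hginv_gx : ginv (g x) = x := hg.injective (hrinv (g x))
  have hobjective : ∀ u, 0 ≤ u →
      (1 / 2) * (x - u) ^ 2 + γ * h u = x ^ 2 / 2 + ∫ z in (0 : ℝ)..u, (ginv z - ginv (g x)) := by
    intro u hu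
    rw [hh u hu, ← mul_assoc, mul_one_div_cancel hγ.ne', one_mul, hginv_gx]
    exact half_sq_sub_add_integral_sub_id hginv.monotone x u
  have hstrict : ∀ u : ℝ, 0 ≤ u → u ≠ g x →
      (1 / 2) * (x - g x) ^ 2 + γ * h (g x) < (1 / 2) * (x - u) ^ 2 + γ * h u := by
    intro u hu hne
    have hint : ∀ b, IntervalIntegrable (fun z => ginv z - ginv (g x)) MeasureTheory.volume 0 b :=
      fun _ => hginv.monotone.intervalIntegrable.sub intervalIntegrable_const
    rw [hobjective u hu, hobjective _ hx, add_lt_add_iff_left, ← sub_pos,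
      integral_interval_sub_left (hint u) (hint (g x))]
    exact hginv.integral_sub_apply_pos hne
  refine ⟨fun u hu => ?_, hstrict⟩
  rcases eq_or_ne u (g x) with rfl | hne
  · exact le_rfl
  · exact (hstrict u hu hne).le

/-- Let `γ > 0` and `g : ℝ → ℝ` be a differentiable bijection with `g' > 0`
everywhere, with inverse `ginv`. Define `h(u) = (1/γ) ∫₀ᵘ (ginv z − z) dz`. Then for every `x`
with `g x ≥ 0`, the point `u = g x` is the unique global minimizer over `u ∈ [0,∞)` of
`u ↦ (1/2)(x − u)² + γ h(u)`. -/
theorem proximal_operator_construction_scalar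
    (γ : ℝ) (hγ : 0 < γ)
    (g : ℝ → ℝ) (hgdiff : Differentiable ℝ g) (hg' : ∀ x : ℝ, 0 < deriv g x)
    (hgbij : Function.Bijective g)
    (ginv : ℝ → ℝ) (hlinv : Function.LeftInverse ginv g)
    (hrinv : Function.RightInverse ginv g)
    (h : ℝ → ℝ)
    (hh : ∀ u : ℝ, 0 ≤ u → h u = (1 / γ) * ∫ z in (0:ℝ)..u, (ginv z - z))
    (x : ℝ) (hx : 0 ≤ g x) :
    (∀ u : ℝ, 0 ≤ u →
        (1 / 2) * (x - g x) ^ 2 + γ * h (g x) ≤ (1 / 2) * (x - u) ^ 2 + γ * h u) ∧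
    (∀ u : ℝ, 0 ≤ u → u ≠ g x →
        (1 / 2) * (x - g x) ^ 2 + γ * h (g x) < (1 / 2) * (x - u) ^ 2 + γ * h u) :=
  proximal_operator_construction_scalar_general γ hγ g hg' ginv hrinv h hh x hx
end

section
/- Let γ > 0 and let g : ℝ → ℝ be a differentiable bijection with g'(x) > 0 for all x ∈ ℝ and inverse g⁻¹, and define h(u) = (1/γ) ∫₀ᵘ (g⁻¹(z) − z) dz for u ≥ 0. Let X ∈ 𝕊^n have orthogonal eigendecomposition X = U diag(λ₁,…,λₙ) Uᵀ and assume g(λᵢ) ≥ 0 for every i. Define the eigenvalue transformation G(X) = U diag(g(λ₁),…,g(λₙ)) Uᵀ, and define the spectral function H on positive semidefinite matrices by H(Y) = Σᵢ h(μᵢ(Y)), where μ₁(Y),…,μₙ(Y) are the eigenvalues of Y counted with multiplicity. Then G(X) is positive semidefinite and is a global minimizer over {Y ∈ 𝕊^n : Y ⪰ 0} of the function Y ↦ (1/2)‖X − Y‖_F² + γ H(Y). (In the paper's notation, (Id + γ ∂H)⁻¹(X) = G(X).) -/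
open Matrix

namespace Stmt4

/-- Frobenius norm `‖X‖_F = √(Tr(Xᵀ X))` on matrices. -/
noncomputable def frob {n : ℕ} (X : Matrix (Fin n) (Fin n) ℝ) : ℝ :=
  Real.sqrt (Matrix.trace (Xᵀ * X))

/-- Scalar prox inequality. -/
private lemma scalar_key (γ : ℝ) (hγ : 0 < γ) (g ginv h : ℝ → ℝ)
    (hg' : ∀ x : ℝ, 0 < deriv g x) (hgsurj : Function.Surjective g)
    (hrinv : Function.RightInverse ginv g)
    (hh : ∀ u : ℝ, 0 ≤ u → h u = (1 / γ) * ∫ z in (0:ℝ)..u, (ginv z - z))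
    (x u : ℝ) (hgx : 0 ≤ g x) (hu : 0 ≤ u) :
    (1/2) * (g x)^2 + γ * h (g x) - x * g x ≤ (1/2) * u^2 + γ * h u - x * u := by
  have hgmono : StrictMono g := strictMono_of_deriv_pos hg'
  have hmono : Monotone ginv := by
    intro a b hab
    have hab' : g (ginv a) ≤ g (ginv b) := by rw [hrinv a, hrinv b]; exact hab
    exact (hgmono.le_iff_le).mp hab'
  have hcont : Continuous ginv := by
    have heq : ginv = ⇑(StrictMono.orderIsoOfSurjective g hgmono hgsurj).symm := by
      funext z
      apply hgmono.injective
      rw [hrinv z]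
      exact (StrictMono.orderIsoOfSurjective_self_symm_apply g hgmono hgsurj z).symm
    rw [heq]
    exact OrderIso.continuous _
  have hint : ∀ a b : ℝ, IntervalIntegrable ginv MeasureTheory.volume a b :=
    fun a b => hcont.intervalIntegrable a b
  have hγh : ∀ w : ℝ, 0 ≤ w → γ * h w = (∫ z in (0:ℝ)..w, ginv z) - w^2/2 := by
    intro w hw
    rw [hh w hw, ← mul_assoc, mul_one_div_cancel (ne_of_gt hγ), one_mul,
      intervalIntegral.integral_sub (hint 0 w) ((continuous_id' : Continuous fun z : ℝ => z).intervalIntegrable 0 w),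
      integral_id]
    ring
  set v := g x with hv
  have hxv : ginv v = x := by
    apply hgmono.injective
    rw [hrinv]
  have hJ : (∫ z in (0:ℝ)..u, ginv z) - (∫ z in (0:ℝ)..v, ginv z) = ∫ z in v..u, ginv z := by
    rw [← intervalIntegral.integral_add_adjacent_intervals (hint 0 v) (hint v u)]
    ring
  have hstep : x * (u - v) ≤ (∫ z in (0:ℝ)..u, ginv z) - ∫ z in (0:ℝ)..v, ginv z := by
    rw [hJ]
    rcases le_total v u with hc | hc
    · have hle := intervalIntegral.integral_mono_on (μ := MeasureTheory.volume)
        (f := fun _ => x) (g := ginv) hc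
        ((continuous_const : Continuous fun _ : ℝ => x).intervalIntegrable v u) (hint v u)
        (fun z hz => by rw [← hxv]; exact hmono hz.1)
      rw [intervalIntegral.integral_const, smul_eq_mul] at hle
      nlinarith [hle]
    · have hsymm : (∫ z in v..u, ginv z) = - ∫ z in u..v, ginv z :=
        intervalIntegral.integral_symm u v
      rw [hsymm]
      have hle := intervalIntegral.integral_mono_on (μ := MeasureTheory.volume)
        (f := ginv) (g := fun _ => x) hc (hint u v)
        ((continuous_const : Continuous fun _ : ℝ => x).intervalIntegrable u v)
        (fun z hz => by rw [← hxv]; exact hmono hz.2)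
      rw [intervalIntegral.integral_const, smul_eq_mul] at hle
      nlinarith [hle]
  have h1 := hγh u hu
  have h2 := hγh v hgx
  linarith [hstep]

private lemma trace_conj {n : ℕ} (U : Matrix (Fin n) (Fin n) ℝ) (hU2 : Uᵀ * U = 1)
    (B : Matrix (Fin n) (Fin n) ℝ) :
    Matrix.trace (U * B * Uᵀ) = Matrix.trace B := by
  rw [Matrix.trace_mul_comm (U * B) Uᵀ, ← Matrix.mul_assoc, hU2, Matrix.one_mul]

private lemma frob_sq {n : ℕ} (A : Matrix (Fin n) (Fin n) ℝ) :
    frob A ^ 2 = Matrix.trace (Aᵀ * A) := by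
  rw [frob, Real.sq_sqrt]
  rw [Matrix.trace]
  refine Finset.sum_nonneg fun j _ => ?_
  rw [Matrix.diag_apply, Matrix.mul_apply]
  refine Finset.sum_nonneg fun i _ => ?_
  rw [Matrix.transpose_apply]
  exact mul_self_nonneg _

private lemma conj_transpose_self {n : ℕ} (U : Matrix (Fin n) (Fin n) ℝ) (a : Fin n → ℝ) :
    (U * Matrix.diagonal a * Uᵀ)ᵀ = U * Matrix.diagonal a * Uᵀ := by
  rw [Matrix.transpose_mul, Matrix.transpose_mul, Matrix.transpose_transpose,
    Matrix.diagonal_transpose, Matrix.mul_assoc]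

private lemma frob_sub_expand {n : ℕ} (S T : Matrix (Fin n) (Fin n) ℝ)
    (hS : Sᵀ = S) (hT : Tᵀ = T) :
    frob (S - T) ^ 2 = Matrix.trace (S*S) - 2 * Matrix.trace (S*T) + Matrix.trace (T*T) := by
  rw [frob_sq, Matrix.transpose_sub, hS, hT, Matrix.sub_mul, Matrix.mul_sub, Matrix.mul_sub,
    Matrix.trace_sub, Matrix.trace_sub, Matrix.trace_sub, Matrix.trace_mul_comm T S]
  ring

private lemma conj_mul_conj {n : ℕ} (U : Matrix (Fin n) (Fin n) ℝ) (hU2 : Uᵀ * U = 1)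
    (d e : Fin n → ℝ) :
    (U * Matrix.diagonal d * Uᵀ) * (U * Matrix.diagonal e * Uᵀ)
      = U * Matrix.diagonal (fun i => d i * e i) * Uᵀ := by
  simp only [Matrix.mul_assoc]
  rw [← Matrix.mul_assoc Uᵀ U, hU2, Matrix.one_mul,
    ← Matrix.mul_assoc (Matrix.diagonal d), Matrix.diagonal_mul_diagonal]

private lemma trace_self {n : ℕ} (U : Matrix (Fin n) (Fin n) ℝ) (hU2 : Uᵀ * U = 1)
    (a b : Fin n → ℝ) :
    Matrix.trace ((U * Matrix.diagonal a * Uᵀ) * (U * Matrix.diagonal b * Uᵀ))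
      = ∑ i, a i * b i := by
  rw [conj_mul_conj U hU2 a b, trace_conj U hU2, Matrix.trace_diagonal]

private lemma trace_XY {n : ℕ} (W : Matrix (Fin n) (Fin n) ℝ) (a b : Fin n → ℝ) :
    Matrix.trace (Matrix.diagonal a * (W * Matrix.diagonal b * Wᵀ))
      = ∑ i, ∑ j, a i * b j * (W i j)^2 := by
  rw [Matrix.trace]
  refine Finset.sum_congr rfl fun i _ => ?_
  rw [Matrix.diag_apply, Matrix.diagonal_mul, Matrix.mul_apply, Finset.mul_sum]
  refine Finset.sum_congr rfl fun j _ => ?_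
  rw [Matrix.mul_diagonal, Matrix.transpose_apply]
  ring

private lemma trace_pair {n : ℕ} (U V : Matrix (Fin n) (Fin n) ℝ)
    (hU1 : U * Uᵀ = 1) (hU2 : Uᵀ * U = 1) (a b : Fin n → ℝ) :
    Matrix.trace ((U * Matrix.diagonal a * Uᵀ) * (V * Matrix.diagonal b * Vᵀ))
      = ∑ i, ∑ j, a i * b j * ((Uᵀ * V) i j)^2 := by
  have key : (U * Matrix.diagonal a * Uᵀ) * (V * Matrix.diagonal b * Vᵀ)
      = U * (Matrix.diagonal a * ((Uᵀ * V) * Matrix.diagonal b * (Uᵀ * V)ᵀ)) * Uᵀ := by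
    rw [Matrix.transpose_mul, Matrix.transpose_transpose]
    simp only [Matrix.mul_assoc]
    rw [hU1, Matrix.mul_one]
  rw [key, trace_conj U hU2, trace_XY]

private lemma charpoly_conj {n : ℕ} (U A : Matrix (Fin n) (Fin n) ℝ)
    (hU1 : U * Uᵀ = 1) (hU2 : Uᵀ * U = 1) :
    (U * A * Uᵀ).charpoly = A.charpoly := by
  classical
  have hmat : Matrix.charmatrix (U * A * Uᵀ) = Polynomial.C.mapMatrix U
      * Matrix.charmatrix A * Polynomial.C.mapMatrix Uᵀ := by
    rw [Matrix.charmatrix, Matrix.charmatrix, Matrix.mul_sub, Matrix.sub_mul]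
    congr 1
    · rw [← (Matrix.scalar_commute (Polynomial.X : Polynomial ℝ)
        (fun r => Commute.all _ _) (Polynomial.C.mapMatrix U)).eq, Matrix.mul_assoc,
        ← _root_.map_mul (Polynomial.C.mapMatrix) U Uᵀ, hU1, RingHom.map_one, Matrix.mul_one]
    · rw [← _root_.map_mul (Polynomial.C.mapMatrix) U A,
        ← _root_.map_mul (Polynomial.C.mapMatrix) (U * A) Uᵀ]
  rw [Matrix.charpoly, hmat, Matrix.det_mul, Matrix.det_mul]
  have hone : Polynomial.C.mapMatrix U * Polynomial.C.mapMatrix Uᵀ = 1 := by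
    rw [← _root_.map_mul (Polynomial.C.mapMatrix) U Uᵀ, hU1, RingHom.map_one]
  have hdet : (Polynomial.C.mapMatrix U).det * (Polynomial.C.mapMatrix Uᵀ).det = 1 := by
    rw [← Matrix.det_mul, hone, Matrix.det_one]
  calc (Polynomial.C.mapMatrix U).det * (Matrix.charmatrix A).det
        * (Polynomial.C.mapMatrix Uᵀ).det
      = (Matrix.charmatrix A).det
        * ((Polynomial.C.mapMatrix U).det * (Polynomial.C.mapMatrix Uᵀ).det) := by ring
    _ = (Matrix.charmatrix A).det := by rw [hdet, mul_one]

private lemma charpoly_diag {n : ℕ} (d : Fin n → ℝ) :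
    (Matrix.diagonal d).charpoly = ∏ i, (Polynomial.X - Polynomial.C (d i)) := by
  rw [Matrix.charpoly]
  have hmat : Matrix.charmatrix (Matrix.diagonal d)
      = Matrix.diagonal (fun i => Polynomial.X - Polynomial.C (d i)) := by
    refine Matrix.ext fun i j => ?_
    by_cases hij : i = j
    · subst hij
      rw [Matrix.charmatrix_apply_eq, Matrix.diagonal_apply_eq d i,
        Matrix.diagonal_apply_eq (fun k => Polynomial.X - Polynomial.C (d k)) i]
    · rw [Matrix.charmatrix_apply_ne _ _ _ hij, Matrix.diagonal_apply_ne _ hij,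
        Matrix.diagonal_apply_ne _ hij, map_zero, neg_zero]
  rw [hmat, Matrix.det_diagonal]

private lemma spectral_real {n : ℕ} (A : Matrix (Fin n) (Fin n) ℝ) (hA : A.IsHermitian) :
    ∃ V : Matrix (Fin n) (Fin n) ℝ, V * Vᵀ = 1 ∧ Vᵀ * V = 1 ∧
      A = V * Matrix.diagonal hA.eigenvalues * Vᵀ := by
  refine ⟨(Matrix.IsHermitian.eigenvectorUnitary hA : Matrix (Fin n) (Fin n) ℝ), ?_, ?_, ?_⟩
  · have := Matrix.mem_unitaryGroup_iff.mp (Matrix.IsHermitian.eigenvectorUnitary hA).2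
    rwa [Matrix.star_eq_conjTranspose, Matrix.conjTranspose_eq_transpose_of_trivial] at this
  · have := Matrix.mem_unitaryGroup_iff'.mp (Matrix.IsHermitian.eigenvectorUnitary hA).2
    rwa [Matrix.star_eq_conjTranspose, Matrix.conjTranspose_eq_transpose_of_trivial] at this
  · have := hA.spectral_theorem
    rwa [Unitary.conjStarAlgAut_apply, Matrix.star_eq_conjTranspose, Matrix.conjTranspose_eq_transpose_of_trivial,
      RCLike.ofReal_real_eq_id, Function.id_comp] at this

private lemma eigen_sum {n : ℕ} (A : Matrix (Fin n) (Fin n) ℝ) (hA : A.IsHermitian)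
    (U : Matrix (Fin n) (Fin n) ℝ) (hU1 : U * Uᵀ = 1) (hU2 : Uᵀ * U = 1)
    (d : Fin n → ℝ) (hAeq : A = U * Matrix.diagonal d * Uᵀ) (f : ℝ → ℝ) :
    ∑ i, f (hA.eigenvalues i) = ∑ i, f (d i) := by
  classical
  have key : ∀ (e : Fin n → ℝ),
      (∏ i, (Polynomial.X - Polynomial.C (e i))).roots = Finset.univ.val.map e := by
    intro e
    have hk := Polynomial.roots_multiset_prod_X_sub_C (Finset.univ.val.map e)
    rw [Multiset.map_map] at hk
    rw [Finset.prod_eq_multiset_prod]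
    simpa [Function.comp] using hk
  obtain ⟨V, hV1, hV2, hVdec⟩ := spectral_real A hA
  have e1 : A.charpoly = ∏ i, (Polynomial.X - Polynomial.C (hA.eigenvalues i)) := by
    conv_lhs => rw [hVdec]
    rw [charpoly_conj V _ hV1 hV2, charpoly_diag]
  have e2 : A.charpoly = ∏ i, (Polynomial.X - Polynomial.C (d i)) := by
    rw [hAeq, charpoly_conj U _ hU1 hU2, charpoly_diag]
  have hmeq : Finset.univ.val.map hA.eigenvalues = Finset.univ.val.map d := by
    rw [← key hA.eigenvalues, ← key d, ← e1, ← e2]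
  calc ∑ i, f (hA.eigenvalues i)
      = ((Finset.univ.val.map hA.eigenvalues).map f).sum := by
        rw [Multiset.map_map, Finset.sum_eq_multiset_sum]; rfl
    _ = ((Finset.univ.val.map d).map f).sum := by rw [hmeq]
    _ = ∑ i, f (d i) := by rw [Multiset.map_map, Finset.sum_eq_multiset_sum]; rfl

/-- with `g` a strictly increasing differentiable bijection,
`h(u) = (1/γ)∫₀ᵘ (g⁻¹(z) − z) dz`, `X = U diag(λ) Uᵀ` an orthogonal eigendecomposition with
`g(λᵢ) ≥ 0` for all `i`, and the spectral function `H(Y) = Σᵢ h(μᵢ(Y))` on PSD matrices, the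
eigenvalue transformation `G(X) = U diag(g(λ₁),…,g(λₙ)) Uᵀ` is PSD and is a global minimizer of
`Y ↦ (1/2)‖X − Y‖_F² + γ H(Y)` over the PSD cone. -/
theorem proximal_operator_construction_matrix
    {n : ℕ} (γ : ℝ) (hγ : 0 < γ)
    (g : ℝ → ℝ) (hgdiff : Differentiable ℝ g) (hg' : ∀ x : ℝ, 0 < deriv g x)
    (hgbij : Function.Bijective g)
    (ginv : ℝ → ℝ) (hlinv : Function.LeftInverse ginv g)
    (hrinv : Function.RightInverse ginv g)
    (h : ℝ → ℝ)
    (hh : ∀ u : ℝ, 0 ≤ u → h u = (1 / γ) * ∫ z in (0:ℝ)..u, (ginv z - z))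
    (U : Matrix (Fin n) (Fin n) ℝ) (hU : U * Uᵀ = 1 ∧ Uᵀ * U = 1)
    (lam : Fin n → ℝ)
    (X : Matrix (Fin n) (Fin n) ℝ) (hX : X = U * Matrix.diagonal lam * Uᵀ)
    (hglam : ∀ i, 0 ≤ g (lam i))
    (GX : Matrix (Fin n) (Fin n) ℝ)
    (hGX : GX = U * Matrix.diagonal (fun i => g (lam i)) * Uᵀ) :
    GX.PosSemidef ∧
    ∀ (hGXh : GX.IsHermitian) (Y : Matrix (Fin n) (Fin n) ℝ) (hY : Y.PosSemidef),
      (1 / 2) * frob (X - GX) ^ 2 + γ * ∑ i, h (hGXh.eigenvalues i) ≤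
        (1 / 2) * frob (X - Y) ^ 2 + γ * ∑ i, h (hY.1.eigenvalues i) := by
  obtain ⟨hU1, hU2⟩ := hU
  have hdiag : (Matrix.diagonal fun i => g (lam i)).PosSemidef :=
    Matrix.posSemidef_diagonal_iff.mpr fun i => hglam i
  have hGXpsd : GX.PosSemidef := by
    rw [hGX]
    have := hdiag.mul_mul_conjTranspose_same U
    rwa [Matrix.conjTranspose_eq_transpose_of_trivial] at this
  refine ⟨hGXpsd, ?_⟩
  intro hGXh Y hY
  have hsumGX : ∑ i, h (hGXh.eigenvalues i) = ∑ i, h (g (lam i)) :=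
    eigen_sum GX hGXh U hU1 hU2 _ hGX h
  obtain ⟨V, hV1, hV2, hYdec⟩ := spectral_real Y hY.1
  set μ : Fin n → ℝ := hY.1.eigenvalues with hμ
  have hμ0 : ∀ j, 0 ≤ μ j := fun j => hY.eigenvalues_nonneg j
  set W : Matrix (Fin n) (Fin n) ℝ := Uᵀ * V with hW
  have hW1 : W * Wᵀ = 1 := by
    rw [hW, Matrix.transpose_mul, Matrix.transpose_transpose]
    calc Uᵀ * V * (Vᵀ * U) = Uᵀ * (V * Vᵀ) * U := by simp only [Matrix.mul_assoc]
      _ = 1 := by rw [hV1, Matrix.mul_one, hU2]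
  have hW2 : Wᵀ * W = 1 := by
    rw [hW, Matrix.transpose_mul, Matrix.transpose_transpose]
    calc Vᵀ * U * (Uᵀ * V) = Vᵀ * (U * Uᵀ) * V := by simp only [Matrix.mul_assoc]
      _ = 1 := by rw [hU1, Matrix.mul_one, hV2]
  have hrow : ∀ i, ∑ j, (W i j)^2 = 1 := by
    intro i
    have h1 : (W * Wᵀ) i i = (1 : Matrix (Fin n) (Fin n) ℝ) i i := by rw [hW1]
    rw [Matrix.mul_apply, Matrix.one_apply_eq] at h1
    simp only [Matrix.transpose_apply] at h1
    calc ∑ j, (W i j)^2 = ∑ j, W i j * W i j :=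
          Finset.sum_congr rfl fun j _ => by ring
      _ = 1 := h1
  have hcol : ∀ j, ∑ i, (W i j)^2 = 1 := by
    intro j
    have h1 : (Wᵀ * W) j j = (1 : Matrix (Fin n) (Fin n) ℝ) j j := by rw [hW2]
    rw [Matrix.mul_apply, Matrix.one_apply_eq] at h1
    simp only [Matrix.transpose_apply] at h1
    calc ∑ i, (W i j)^2 = ∑ i, W i j * W i j :=
          Finset.sum_congr rfl fun i _ => by ring
      _ = 1 := h1
  have hXt : Xᵀ = X := by rw [hX]; exact conj_transpose_self U lam
  have hGXt : GXᵀ = GX := by rw [hGX]; exact conj_transpose_self U _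
  have hYt : Yᵀ = Y := by
    rw [← Matrix.conjTranspose_eq_transpose_of_trivial]; exact hY.1
  have tXX : Matrix.trace (X*X) = ∑ i, lam i * lam i := by
    rw [hX]; exact trace_self U hU2 lam lam
  have tXGX : Matrix.trace (X*GX) = ∑ i, lam i * g (lam i) := by
    rw [hX, hGX]; exact trace_self U hU2 lam _
  have tGXGX : Matrix.trace (GX*GX) = ∑ i, g (lam i) * g (lam i) := by
    rw [hGX]; exact trace_self U hU2 _ _
  have tYY : Matrix.trace (Y*Y) = ∑ j, μ j * μ j := by
    rw [hYdec]; exact trace_self V hV2 μ μ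
  have tXY : Matrix.trace (X*Y) = ∑ i, ∑ j, lam i * μ j * (W i j)^2 := by
    rw [hX, hYdec, hW]; exact trace_pair U V hU1 hU2 lam μ
  -- main comparison of sums
  have main : ∑ i, ((1/2) * (g (lam i))^2 + γ * h (g (lam i)) - lam i * g (lam i))
      ≤ (∑ j, ((1/2) * (μ j)^2 + γ * h (μ j))) - ∑ i, ∑ j, lam i * μ j * (W i j)^2 := by
    have lhs_eq : ∑ i, ((1/2) * (g (lam i))^2 + γ * h (g (lam i)) - lam i * g (lam i))
        = ∑ i, ∑ j, (W i j)^2 * ((1/2) * (g (lam i))^2 + γ * h (g (lam i)) - lam i * g (lam i)) := by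
      refine Finset.sum_congr rfl fun i _ => ?_
      rw [← Finset.sum_mul, hrow i, one_mul]
    have rhs_eq : ∑ i, ∑ j, (W i j)^2 * ((1/2) * (μ j)^2 + γ * h (μ j) - lam i * μ j)
        = (∑ j, ((1/2) * (μ j)^2 + γ * h (μ j))) - ∑ i, ∑ j, lam i * μ j * (W i j)^2 := by
      have split : ∀ i j : Fin n, (W i j)^2 * ((1/2) * (μ j)^2 + γ * h (μ j) - lam i * μ j)
          = (W i j)^2 * ((1/2) * (μ j)^2 + γ * h (μ j)) - lam i * μ j * (W i j)^2 := by
        intro i j; ring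
      simp only [split, Finset.sum_sub_distrib]
      congr 1
      rw [Finset.sum_comm]
      refine Finset.sum_congr rfl fun j _ => ?_
      rw [← Finset.sum_mul, hcol j, one_mul]
    rw [lhs_eq, ← rhs_eq]
    refine Finset.sum_le_sum fun i _ => Finset.sum_le_sum fun j _ => ?_
    exact mul_le_mul_of_nonneg_left
      (scalar_key γ hγ g ginv h hg' hgbij.2 hrinv hh (lam i) (μ j) (hglam i) (hμ0 j))
      (sq_nonneg _)
  have exp1 : ∑ i, ((1/2) * (g (lam i))^2 + γ * h (g (lam i)) - lam i * g (lam i))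
      = (1/2) * (∑ i, g (lam i) * g (lam i)) + γ * (∑ i, h (g (lam i)))
        - ∑ i, lam i * g (lam i) := by
    rw [Finset.mul_sum, Finset.mul_sum, ← Finset.sum_add_distrib, ← Finset.sum_sub_distrib]
    exact Finset.sum_congr rfl fun i _ => by ring
  have exp2 : ∑ j, ((1/2) * (μ j)^2 + γ * h (μ j))
      = (1/2) * (∑ j, μ j * μ j) + γ * (∑ j, h (μ j)) := by
    rw [Finset.mul_sum, Finset.mul_sum, ← Finset.sum_add_distrib]
    exact Finset.sum_congr rfl fun j _ => by ring
  rw [frob_sub_expand X GX hXt hGXt, frob_sub_expand X Y hXt hYt, hsumGX,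
    tXX, tXGX, tGXGX, tYY, tXY]
  linarith [main, exp1, exp2]

end Stmt4
end

section
/- Assume 𝒜𝒜* is invertible and some triple (X*, y*, S*) satisfies the optimality conditions. Then the sequence (Xᵏ, yᵏ, Sᵏ) generated by the exact classical ADMM iteration satisfies lim_{k→∞} (−bᵀyᵏ + bᵀy*) = 0 and lim_{k→∞} ‖𝒜*(yᵏ) + Sᵏ − C‖_F = 0. -/
open Matrix

namespace QADMM

variable {n m : ℕ}

/-- Trace inner ℝ product `⟨A,B⟩ = Tr(AᵀB)`. -/
noncomputable def minner (A B : Matrix (Fin n) (Fin n) ℝ) : ℝ :=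
  Matrix.trace (Aᵀ * B)

/-- Frobenius norm `‖X‖_F = √(Tr(Xᵀ X))`. -/
noncomputable def frob (X : Matrix (Fin n) (Fin n) ℝ) : ℝ :=
  Real.sqrt (Matrix.trace (Xᵀ * X))

/-- The linear map `𝒜(X) = (⟨A⁽¹⁾,X⟩, …, ⟨A⁽ᵐ⁾,X⟩)`. -/
noncomputable def Amap (A : Fin m → Matrix (Fin n) (Fin n) ℝ)
    (X : Matrix (Fin n) (Fin n) ℝ) : Fin m → ℝ :=
  fun i => minner (A i) X

/-- The adjoint map `𝒜*(y) = Σᵢ yᵢ A⁽ⁱ⁾`. -/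
noncomputable def Aadj (A : Fin m → Matrix (Fin n) (Fin n) ℝ)
    (y : Fin m → ℝ) : Matrix (Fin n) (Fin n) ℝ :=
  ∑ i, y i • A i

/-- The `m×m` matrix `𝒜𝒜*` with entries `⟨A⁽ⁱ⁾, A⁽ʲ⁾⟩`. -/
noncomputable def AAt (A : Fin m → Matrix (Fin n) (Fin n) ℝ) : Matrix (Fin m) (Fin m) ℝ :=
  Matrix.of fun i j => minner (A i) (A j)

/-- `proj` is the Frobenius-metric projection onto the PSD cone: `proj Z` is positive
semidefinite and is a nearest PSD matrix to `Z` in Frobenius norm. -/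
def IsProjPSD (proj : Matrix (Fin n) (Fin n) ℝ → Matrix (Fin n) (Fin n) ℝ) : Prop :=
  ∀ Z : Matrix (Fin n) (Fin n) ℝ,
    (proj Z).PosSemidef ∧
    ∀ W : Matrix (Fin n) (Fin n) ℝ, W.PosSemidef → frob (Z - proj Z) ≤ frob (Z - W)

/-- `(X*, y*, S*)` satisfies the SDP optimality conditions: primal feasibility, dual
feasibility, and complementary slackness. -/
def OptCond (A : Fin m → Matrix (Fin n) (Fin n) ℝ) (C : Matrix (Fin n) (Fin n) ℝ)
    (b : Fin m → ℝ) (Xs : Matrix (Fin n) (Fin n) ℝ) (ys : Fin m → ℝ)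
    (Ss : Matrix (Fin n) (Fin n) ℝ) : Prop :=
  Amap A Xs = b ∧ Xs.PosSemidef ∧ Aadj A ys + Ss = C ∧ Ss.PosSemidef ∧ Xs * Ss = 0

/-- The exact classical ADMM iteration for the dual SDP, with parameter `γ > 0`:
`y^{k+1} = −(𝒜𝒜*)⁻¹(γ(𝒜(Xᵏ) − b) + 𝒜(Sᵏ − C))`,
`S^{k+1} = Proj_{𝕊₊ⁿ}(C − 𝒜*(y^{k+1}) − γXᵏ)`,
`X^{k+1} = Xᵏ + (1/γ)(𝒜*(y^{k+1}) + S^{k+1} − C)`. -/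
def ADMMSeq (A : Fin m → Matrix (Fin n) (Fin n) ℝ) (C : Matrix (Fin n) (Fin n) ℝ)
    (b : Fin m → ℝ) (projPSD : Matrix (Fin n) (Fin n) ℝ → Matrix (Fin n) (Fin n) ℝ)
    (γ : ℝ) (X : ℕ → Matrix (Fin n) (Fin n) ℝ) (y : ℕ → Fin m → ℝ)
    (S : ℕ → Matrix (Fin n) (Fin n) ℝ) : Prop :=
  ∀ k : ℕ,
    y (k + 1) = -((AAt A)⁻¹.mulVec (γ • (Amap A (X k) - b) + Amap A (S k - C))) ∧
    S (k + 1) = projPSD (C - Aadj A (y (k + 1)) - γ • X k) ∧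
    X (k + 1) = X k + γ⁻¹ • (Aadj A (y (k + 1)) + S (k + 1) - C)

-- ===================== auxiliary development =====================

open Filter

/-! ### Euclidean space bridge -/

abbrev Emat (n : ℕ) := EuclideanSpace ℝ (Fin n × Fin n)

noncomputable def em : Matrix (Fin n) (Fin n) ℝ ≃ₗ[ℝ] Emat n where
  toFun M := WithLp.toLp 2 (fun p : Fin n × Fin n => M p.1 p.2)
  invFun x := Matrix.of fun i j => x (i, j)
  left_inv _ := rfl
  right_inv _ := rfl
  map_add' _ _ := rfl
  map_smul' _ _ := rfl

lemma minner_eq_sum (A B : Matrix (Fin n) (Fin n) ℝ) :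
    minner A B = ∑ i, ∑ j, A i j * B i j := by
  simp only [minner, Matrix.trace, Matrix.diag, Matrix.mul_apply, Matrix.transpose_apply]
  exact Finset.sum_comm

lemma em_inner (A B : Matrix (Fin n) (Fin n) ℝ) :
    (inner ℝ (em A) (em B) : ℝ) = minner A B := by
  rw [minner_eq_sum, PiLp.inner_apply]
  simp only [RCLike.inner_apply, starRingEnd_apply, star_trivial]
  rw [Fintype.sum_prod_type]
  exact Finset.sum_congr rfl fun i _ => Finset.sum_congr rfl fun j _ => mul_comm _ _

lemma em_inner' (M : Matrix (Fin n) (Fin n) ℝ) (w : Emat n) :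
    (inner ℝ (em M) w : ℝ) = minner M (em.symm w) := by
  have h := em_inner M (em.symm w)
  simpa using h

lemma minner_comm (A B : Matrix (Fin n) (Fin n) ℝ) : minner A B = minner B A := by
  simp only [minner_eq_sum]; congr 1; ext i; congr 1; ext j; ring

lemma em_norm (X : Matrix (Fin n) (Fin n) ℝ) : ‖em X‖ = frob X := by
  have h := em_inner X X
  rw [real_inner_self_eq_norm_sq] at h
  rw [frob]
  have h2 : Matrix.trace (Xᵀ * X) = minner X X := rfl
  rw [h2, ← h, Real.sqrt_sq (norm_nonneg _)]

lemma frob_eq (X : Matrix (Fin n) (Fin n) ℝ) : frob X = ‖em X‖ := (em_norm X).symm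

/-! ### PSD cone basics -/

lemma psd_smul {M : Matrix (Fin n) (Fin n) ℝ} (hM : M.PosSemidef) {c : ℝ} (hc : 0 ≤ c) :
    (c • M).PosSemidef := by
  refine Matrix.PosSemidef.of_dotProduct_mulVec_nonneg ?_ ?_
  · unfold Matrix.IsHermitian
    rw [Matrix.conjTranspose_smul, hM.1]
    simp
  · intro x
    simp only [Matrix.smul_mulVec, dotProduct_smul, smul_eq_mul]
    exact mul_nonneg hc (hM.dotProduct_mulVec_nonneg x)

lemma psd_transpose_eq {M : Matrix (Fin n) (Fin n) ℝ} (hM : M.PosSemidef) : Mᵀ = M := by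
  rw [← Matrix.conjTranspose_eq_transpose_of_trivial M]; exact hM.1

lemma psd_trace_nonneg {M : Matrix (Fin n) (Fin n) ℝ} (hM : M.PosSemidef) :
    0 ≤ Matrix.trace M := by
  apply Finset.sum_nonneg
  intro i _
  have h := hM.dotProduct_mulVec_nonneg (Pi.single i 1)
  simpa [dotProduct, Matrix.mulVec, Pi.single_apply, Finset.sum_ite_eq,
    Matrix.diag] using h

lemma minner_nonneg {M N : Matrix (Fin n) (Fin n) ℝ} (hM : M.PosSemidef) (hN : N.PosSemidef) :
    0 ≤ minner M N := by
  have h := (hM.hadamard hN).dotProduct_mulVec_nonneg (fun _ => (1:ℝ))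
  rw [minner_eq_sum]
  simpa [dotProduct, Matrix.mulVec, Matrix.hadamard] using h

lemma psd_of_symm_dual {M : Matrix (Fin n) (Fin n) ℝ} (hMs : M.IsSymm)
    (h : ∀ W : Matrix (Fin n) (Fin n) ℝ, W.PosSemidef → 0 ≤ minner M W) :
    M.PosSemidef := by
  refine Matrix.PosSemidef.of_dotProduct_mulVec_nonneg ?_ ?_
  · unfold Matrix.IsHermitian
    rw [Matrix.conjTranspose_eq_transpose_of_trivial]
    exact hMs
  · intro x
    have hW : (Matrix.vecMulVec x x).PosSemidef := by
      refine Matrix.PosSemidef.of_dotProduct_mulVec_nonneg ?_ ?_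
      · unfold Matrix.IsHermitian
        rw [Matrix.conjTranspose_eq_transpose_of_trivial]
        ext i j
        simp [Matrix.vecMulVec_apply, mul_comm]
      · intro y
        have h2 : (star y) ⬝ᵥ (Matrix.vecMulVec x x) *ᵥ y = (x ⬝ᵥ y) * (x ⬝ᵥ y) := by
          simp only [dotProduct, Matrix.mulVec, Matrix.vecMulVec_apply, star_trivial,
            Finset.sum_mul, Finset.mul_sum]
          rw [Finset.sum_comm]
          congr 1; ext i; congr 1; ext j; ring
        rw [h2]
        exact mul_self_nonneg _
    have h3 := h _ hW
    have hrw : minner M (Matrix.vecMulVec x x) = (star x) ⬝ᵥ M *ᵥ x := by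
      simp only [minner_eq_sum, Matrix.vecMulVec_apply, dotProduct, Matrix.mulVec,
        star_trivial, Finset.mul_sum]
      congr 1; ext i; congr 1; ext j; ring
    rwa [hrw] at h3

/-! ### projection onto the PSD cone, within `Emat n` -/

section proj
variable (projPSD : Matrix (Fin n) (Fin n) ℝ → Matrix (Fin n) (Fin n) ℝ)

noncomputable def pE (x : Emat n) : Emat n := em (projPSD (em.symm x))

variable {projPSD}
variable (hproj : IsProjPSD projPSD)
include hproj

lemma pE_psd (x : Emat n) : (em.symm (pE projPSD x)).PosSemidef := by
  simpa [pE] using (hproj (em.symm x)).1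

lemma pE_near (x w : Emat n) (hw : (em.symm w).PosSemidef) :
    ‖x - pE projPSD x‖ ≤ ‖x - w‖ := by
  have h := (hproj (em.symm x)).2 (em.symm w) hw
  rw [frob_eq, frob_eq] at h
  simpa [pE, map_sub] using h

lemma pE_VI (x w : Emat n) (hw : (em.symm w).PosSemidef) :
    (inner ℝ (x - pE projPSD x) (w - pE projPSD x) : ℝ) ≤ 0 := by
  by_contra hcon
  push_neg at hcon
  set p := pE projPSD x with hp
  set a : Emat n := x - p with ha
  set d : Emat n := w - p with hd
  set c : ℝ := inner ℝ a d with hc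
  have hcpos : 0 < c := hcon
  have hdne : d ≠ 0 := by
    intro h0
    rw [hc, h0, inner_zero_right] at hcpos; exact lt_irrefl _ hcpos
  have hdn : 0 < ‖d‖ := norm_pos_iff.mpr hdne
  have hdsq : 0 < ‖d‖ ^ 2 := by positivity
  set t : ℝ := min 1 (c / ‖d‖ ^ 2) with ht
  have ht0 : 0 < t := lt_min one_pos (by positivity)
  have ht1 : t ≤ 1 := min_le_left _ _
  have htd : t * ‖d‖ ^ 2 ≤ c := by
    have h1 : t ≤ c / ‖d‖ ^ 2 := min_le_right _ _
    calc t * ‖d‖ ^ 2 ≤ (c / ‖d‖ ^ 2) * ‖d‖ ^ 2 := by nlinarith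
    _ = c := by field_simp
  have hpsd : (em.symm (p + t • d)).PosSemidef := by
    have h1 : em.symm (p + t • d) = (1 - t) • em.symm p + t • em.symm w := by
      simp only [map_add, LinearEquiv.map_smul, hd, map_sub]
      module
    rw [h1]
    exact Matrix.PosSemidef.add (psd_smul (pE_psd hproj x) (by linarith))
      (psd_smul hw (le_of_lt ht0))
  have hle : ‖x - p‖ ≤ ‖x - (p + t • d)‖ := pE_near hproj x _ hpsd
  have hexp : ‖x - (p + t • d)‖ ^ 2 = ‖a‖ ^ 2 - 2 * t * c + t ^ 2 * ‖d‖ ^ 2 := by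
    have h1 : x - (p + t • d) = a - t • d := by rw [ha]; module
    rw [h1, norm_sub_sq_real, real_inner_smul_right, norm_smul]
    simp [hc, mul_pow, abs_of_nonneg (le_of_lt ht0)]
    ring
  have hsq : ‖a‖ ^ 2 ≤ ‖x - (p + t • d)‖ ^ 2 := by
    nlinarith [norm_nonneg (x - p), norm_nonneg (x - (p + t • d))]
  rw [hexp] at hsq
  nlinarith

lemma pE_eq_of_VI (x s : Emat n) (hs : (em.symm s).PosSemidef)
    (h : ∀ w : Emat n, (em.symm w).PosSemidef → (inner ℝ (x - s) (w - s) : ℝ) ≤ 0) :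
    pE projPSD x = s := by
  have c1 := pE_VI hproj x s hs
  have c2 := h (pE projPSD x) (pE_psd hproj x)
  have key : (inner ℝ (s - pE projPSD x) (s - pE projPSD x) : ℝ) ≤ 0 := by
    have h3 : (inner ℝ (x - pE projPSD x) (s - pE projPSD x) : ℝ)
        - (inner ℝ (x - s) (s - pE projPSD x) : ℝ)
        = inner ℝ (s - pE projPSD x) (s - pE projPSD x) := by
      rw [← inner_sub_left]
      congr 1
      abel
    have c2' : (0:ℝ) ≤ inner ℝ (x - s) (s - pE projPSD x) := by
      have h4 : s - pE projPSD x = -(pE projPSD x - s) := by abel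
      rw [h4, inner_neg_right]
      linarith
    linarith
  have hn := real_inner_self_eq_norm_sq (s - pE projPSD x)
  have h0 : ‖s - pE projPSD x‖ ^ 2 = 0 := le_antisymm (by linarith) (by positivity)
  have h5 : s - pE projPSD x = 0 := by
    rw [pow_eq_zero_iff (two_ne_zero)] at h0
    exact norm_eq_zero.mp h0
  exact (sub_eq_zero.mp h5).symm

lemma pE_firm (x y : Emat n) :
    ‖pE projPSD x - pE projPSD y‖ ^ 2 ≤ (inner ℝ (pE projPSD x - pE projPSD y) (x - y) : ℝ) := by
  have h1 := pE_VI hproj x (pE projPSD y) (pE_psd hproj y)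
  have h2 := pE_VI hproj y (pE projPSD x) (pE_psd hproj x)
  set px := pE projPSD x
  set py := pE projPSD y
  have e2' : (inner ℝ (py - y) (py - px) : ℝ) ≤ 0 := by
    have ha : py - y = -(y - py) := by abel
    rw [ha, inner_neg_left]
    have hb : py - px = -(px - py) := by abel
    rw [hb, inner_neg_right]
    simpa using h2
  have hadd : (inner ℝ ((x - px) + (py - y)) (py - px) : ℝ) ≤ 0 := by
    rw [inner_add_left]; linarith
  have hrw : (x - px) + (py - y) = (x - y) - (px - py) := by abel
  rw [hrw, inner_sub_left] at hadd
  have h3 : (inner ℝ (px - py) (py - px) : ℝ) = - (inner ℝ (px - py) (px - py) : ℝ) := by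
    have hb : py - px = -(px - py) := by abel
    rw [hb, inner_neg_right]
  rw [h3] at hadd
  have h4 : (inner ℝ (x - y) (py - px) : ℝ) = - (inner ℝ (px - py) (x - y) : ℝ) := by
    have hb : py - px = -(px - py) := by abel
    rw [hb, inner_neg_right, real_inner_comm]
  rw [h4] at hadd
  have h5 := real_inner_self_eq_norm_sq (px - py)
  linarith

lemma pE_nonexp (x y : Emat n) : ‖pE projPSD x - pE projPSD y‖ ≤ ‖x - y‖ := by
  have h := pE_firm hproj x y
  have hcs := real_inner_le_norm (pE projPSD x - pE projPSD y) (x - y)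
  by_cases h0 : ‖pE projPSD x - pE projPSD y‖ = 0
  · rw [h0]; exact norm_nonneg _
  · have hpos : 0 < ‖pE projPSD x - pE projPSD y‖ := lt_of_le_of_ne (norm_nonneg _) (Ne.symm h0)
    nlinarith

lemma pE_continuous : Continuous (pE projPSD (n := n)) := by
  have h : LipschitzWith 1 (pE projPSD (n := n)) := by
    apply LipschitzWith.of_dist_le_mul
    intro x y
    rw [dist_eq_norm, dist_eq_norm]
    simpa using pE_nonexp hproj x y
  exact h.continuous

end proj

/-! ### linearity of `Amap`, `Aadj`, and the projector `qE` -/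

lemma minner_add (A B C : Matrix (Fin n) (Fin n) ℝ) :
    minner A (B + C) = minner A B + minner A C := by
  simp [minner, Matrix.mul_add]

lemma minner_smul (A B : Matrix (Fin n) (Fin n) ℝ) (c : ℝ) :
    minner A (c • B) = c * minner A B := by
  simp [minner, Matrix.mul_smul]

lemma minner_sub (A B C : Matrix (Fin n) (Fin n) ℝ) :
    minner A (B - C) = minner A B - minner A C := by
  simp [minner, Matrix.mul_sub]

lemma Amap_add (A : Fin m → Matrix (Fin n) (Fin n) ℝ) (X Y : Matrix (Fin n) (Fin n) ℝ) :
    Amap A (X + Y) = Amap A X + Amap A Y := by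
  funext i; simp [Amap, minner_add]

lemma Amap_sub (A : Fin m → Matrix (Fin n) (Fin n) ℝ) (X Y : Matrix (Fin n) (Fin n) ℝ) :
    Amap A (X - Y) = Amap A X - Amap A Y := by
  funext i; simp [Amap, minner_sub]

lemma Amap_smul (A : Fin m → Matrix (Fin n) (Fin n) ℝ) (c : ℝ) (X : Matrix (Fin n) (Fin n) ℝ) :
    Amap A (c • X) = c • Amap A X := by
  funext i; simp [Amap, minner_smul]

lemma Aadj_add (A : Fin m → Matrix (Fin n) (Fin n) ℝ) (v w : Fin m → ℝ) :
    Aadj A (v + w) = Aadj A v + Aadj A w := by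
  simp [Aadj, add_smul, Finset.sum_add_distrib]

lemma Aadj_smul (A : Fin m → Matrix (Fin n) (Fin n) ℝ) (c : ℝ) (v : Fin m → ℝ) :
    Aadj A (c • v) = c • Aadj A v := by
  simp [Aadj, Finset.smul_sum, smul_smul]

lemma Aadj_sub (A : Fin m → Matrix (Fin n) (Fin n) ℝ) (v w : Fin m → ℝ) :
    Aadj A (v - w) = Aadj A v - Aadj A w := by
  simp [Aadj, sub_smul, Finset.sum_sub_distrib]

lemma Aadj_neg (A : Fin m → Matrix (Fin n) (Fin n) ℝ) (v : Fin m → ℝ) :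
    Aadj A (-v) = - Aadj A v := by
  simp [Aadj, neg_smul]

lemma Aadj_isSymm {A : Fin m → Matrix (Fin n) (Fin n) ℝ} (hA : ∀ i, (A i).IsSymm)
    (v : Fin m → ℝ) : (Aadj A v).IsSymm := by
  unfold Matrix.IsSymm Aadj
  rw [Matrix.transpose_sum]
  congr 1
  funext i
  rw [Matrix.transpose_smul, hA i]

lemma minner_Aadj (A : Fin m → Matrix (Fin n) (Fin n) ℝ) (v : Fin m → ℝ)
    (Y : Matrix (Fin n) (Fin n) ℝ) : minner (Aadj A v) Y = v ⬝ᵥ Amap A Y := by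
  have h1 : minner (Aadj A v) Y = minner Y (Aadj A v) := minner_comm _ _
  rw [h1, Aadj]
  unfold dotProduct Amap
  rw [show minner Y (∑ i, v i • A i) = ∑ i, v i * minner Y (A i) by
    induction (Finset.univ : Finset (Fin m)) using Finset.induction with
    | empty => simp [minner]
    | @insert a s h ih => rw [Finset.sum_insert h, minner_add, ih, Finset.sum_insert h, minner_smul]]
  congr 1; ext i; rw [minner_comm]

lemma Amap_Aadj (A : Fin m → Matrix (Fin n) (Fin n) ℝ) (v : Fin m → ℝ) :
    Amap A (Aadj A v) = AAt A *ᵥ v := by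
  funext i
  rw [show (Amap A (Aadj A v)) i = minner (A i) (Aadj A v) from rfl, minner_comm,
    minner_Aadj]
  unfold Matrix.mulVec dotProduct AAt Amap
  simp only [Matrix.of_apply]
  congr 1; ext j; rw [minner_comm, mul_comm]

lemma AAt_symm (A : Fin m → Matrix (Fin n) (Fin n) ℝ) : (AAt A)ᵀ = AAt A := by
  ext i j; simp [AAt, Matrix.transpose_apply, minner_comm]

section qsec
variable (A : Fin m → Matrix (Fin n) (Fin n) ℝ)

noncomputable def qE : Emat n →ₗ[ℝ] Emat n where
  toFun x := em (Aadj A ((AAt A)⁻¹ *ᵥ Amap A (em.symm x)))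
  map_add' x y := by
    simp only [map_add, Amap_add, Matrix.mulVec_add, Aadj_add]
  map_smul' c x := by
    simp only [RingHom.id_apply, LinearEquiv.map_smul, Amap_smul, Matrix.mulVec_smul, Aadj_smul]

lemma AAt_inv_symm : ((AAt A)⁻¹)ᵀ = (AAt A)⁻¹ := by
  rw [Matrix.transpose_nonsing_inv, AAt_symm]

lemma dot_symm_swap (M : Matrix (Fin m) (Fin m) ℝ) (hM : Mᵀ = M) (u t : Fin m → ℝ) :
    (M *ᵥ u) ⬝ᵥ t = u ⬝ᵥ (M *ᵥ t) := by
  rw [dotProduct_comm, dotProduct_mulVec, ← Matrix.mulVec_transpose, hM,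
    dotProduct_comm]

lemma qE_inner_symm (x y : Emat n) : (inner ℝ (qE A x) y : ℝ) = inner ℝ x (qE A y) := by
  have h1 : (inner ℝ (qE A x) y : ℝ)
      = minner (Aadj A ((AAt A)⁻¹ *ᵥ Amap A (em.symm x))) (em.symm y) := by
    have h := em_inner (Aadj A ((AAt A)⁻¹ *ᵥ Amap A (em.symm x))) (em.symm y)
    simp only [LinearEquiv.apply_symm_apply] at h
    exact h
  have h2 : (inner ℝ x (qE A y) : ℝ)
      = minner (Aadj A ((AAt A)⁻¹ *ᵥ Amap A (em.symm y))) (em.symm x) := by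
    have h := em_inner (Aadj A ((AAt A)⁻¹ *ᵥ Amap A (em.symm y))) (em.symm x)
    simp only [LinearEquiv.apply_symm_apply] at h
    rw [show (qE A) y = em (Aadj A ((AAt A)⁻¹ *ᵥ Amap A (em.symm y))) from rfl, real_inner_comm]
    exact h
  rw [h1, h2, minner_Aadj, minner_Aadj, dot_symm_swap _ (AAt_inv_symm A),
    dotProduct_comm]

variable {A}
variable (hAAt : IsUnit (AAt A))
include hAAt

lemma mulVec_inv_AAt (v : Fin m → ℝ) : (AAt A)⁻¹ *ᵥ (AAt A *ᵥ v) = v := by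
  rw [Matrix.mulVec_mulVec, Matrix.nonsing_inv_mul _ (Matrix.isUnit_iff_isUnit_det _ |>.mp hAAt),
    Matrix.one_mulVec]

lemma AAt_mulVec_inv (v : Fin m → ℝ) : AAt A *ᵥ ((AAt A)⁻¹ *ᵥ v) = v := by
  rw [Matrix.mulVec_mulVec, Matrix.mul_nonsing_inv _ (Matrix.isUnit_iff_isUnit_det _ |>.mp hAAt),
    Matrix.one_mulVec]

lemma qE_fix (v : Fin m → ℝ) : qE A (em (Aadj A v)) = em (Aadj A v) := by
  show em (Aadj A ((AAt A)⁻¹ *ᵥ Amap A (em.symm (em (Aadj A v))))) = em (Aadj A v)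
  rw [LinearEquiv.symm_apply_apply, Amap_Aadj, mulVec_inv_AAt hAAt]

lemma qE_idem (x : Emat n) : qE A (qE A x) = qE A x := by
  have h : qE A x = em (Aadj A ((AAt A)⁻¹ *ᵥ Amap A (em.symm x))) := rfl
  rw [h, qE_fix hAAt]

lemma qE_norm_refl (x : Emat n) : ‖2 • qE A x - x‖ = ‖x‖ := by
  have hq : (inner ℝ (qE A x) x : ℝ) = ‖qE A x‖ ^ 2 := by
    have h1 := qE_inner_symm A x (qE A x)
    rw [qE_idem hAAt x] at h1
    rw [← real_inner_self_eq_norm_sq, h1, real_inner_comm]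
  have hsq : ‖2 • qE A x - x‖ ^ 2 = ‖x‖ ^ 2 := by
    rw [norm_sub_sq_real]
    have h2 : ‖(2:ℕ) • qE A x‖ = 2 * ‖qE A x‖ := by
      rw [show ((2:ℕ) • qE A x) = (2:ℝ) • qE A x by module, norm_smul]
      simp
    have h3 : (inner ℝ ((2:ℕ) • qE A x) x : ℝ) = 2 * inner ℝ (qE A x) x := by
      rw [show ((2:ℕ) • qE A x) = (2:ℝ) • qE A x by module, real_inner_smul_left]
    rw [h2, h3, hq]
    ring
  have h := congrArg Real.sqrt hsq
  rwa [Real.sqrt_sq (norm_nonneg _), Real.sqrt_sq (norm_nonneg _)] at h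

end qsec

/-! ### an abstract Fejér-monotone convergence lemma -/

section fejer
variable {F : Type*} [NormedAddCommGroup F] [InnerProductSpace ℝ F]

private lemma norm_le_of_sq_le {a b : ℝ} (ha : 0 ≤ a) (hb : 0 ≤ b) (h : a ^ 2 ≤ b ^ 2) :
    a ≤ b := by nlinarith

lemma refl_nonexp_of_firm (p : F → F)
    (hfirm : ∀ x y, ‖p x - p y‖ ^ 2 ≤ (inner ℝ (p x - p y) (x - y) : ℝ)) (x y : F) :
    ‖(2 • p x - x) - (2 • p y - y)‖ ≤ ‖x - y‖ := by
  have hk : (2 • p x - x) - (2 • p y - y) = (2:ℝ) • (p x - p y) - (x - y) := by module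
  have hsq : ‖(2 • p x - x) - (2 • p y - y)‖ ^ 2 ≤ ‖x - y‖ ^ 2 := by
    rw [hk, norm_sub_sq_real, real_inner_smul_left, norm_smul]
    rw [Real.norm_eq_abs]
    have h2 : |(2:ℝ)| = 2 := by norm_num
    rw [h2]
    have h := hfirm x y
    nlinarith [norm_nonneg (p x - p y)]
  exact norm_le_of_sq_le (norm_nonneg _) (norm_nonneg _) hsq

lemma Tmap_firm (p : F → F)
    (hrefl : ∀ x y, ‖(2 • p x - x) - (2 • p y - y)‖ ≤ ‖x - y‖)
    (q : F →ₗ[ℝ] F) (hq : ∀ x, ‖2 • q x - x‖ = ‖x‖) (c1 : F) (z w : F) :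
    ‖(z - p z + q (2 • p z - z) + c1) - (w - p w + q (2 • p w - w) + c1)‖ ^ 2
      + ‖(z - (z - p z + q (2 • p z - z) + c1)) - (w - (w - p w + q (2 • p w - w) + c1))‖ ^ 2
      ≤ ‖z - w‖ ^ 2 := by
  set a : F := z - w with ha
  set r' : F := (2 • p z - z) - (2 • p w - w) with hr'
  set u : F := 2 • q r' - r' with hu
  have hqsub : q r' = q (2 • p z - z) - q (2 • p w - w) := by rw [hr', map_sub]
  have h1 : (z - p z + q (2 • p z - z) + c1) - (w - p w + q (2 • p w - w) + c1)
      = (2:ℝ)⁻¹ • (a + u) := by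
    rw [hu, hqsub, hr', ha]
    module
  have h2 : (z - (z - p z + q (2 • p z - z) + c1)) - (w - (w - p w + q (2 • p w - w) + c1))
      = (2:ℝ)⁻¹ • (a - u) := by
    rw [hu, hqsub, hr', ha]
    module
  have hun : ‖u‖ ≤ ‖a‖ := by
    rw [hu]
    calc ‖2 • q r' - r'‖ = ‖r'‖ := hq r'
    _ ≤ ‖a‖ := hrefl z w
  rw [h1, h2]
  have hpar := parallelogram_law_with_norm ℝ a u
  rw [norm_smul, norm_smul]
  rw [Real.norm_eq_abs]
  have h3 : |(2:ℝ)⁻¹| = 2⁻¹ := by norm_num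
  rw [h3]
  nlinarith [norm_nonneg a, norm_nonneg u, norm_nonneg (a + u), norm_nonneg (a - u)]

lemma fejer [FiniteDimensional ℝ F] (T : F → F) (hT : Continuous T)
    (hfirm : ∀ z w, ‖T z - T w‖ ^ 2 + ‖(z - T z) - (w - T w)‖ ^ 2 ≤ ‖z - w‖ ^ 2)
    (zs : F) (hzs : T zs = zs) (u : ℕ → F) (hu : ∀ k, u (k + 1) = T (u k)) :
    ∃ c, T c = c ∧ Tendsto u atTop (nhds c) := by
  have key : ∀ (zf : F), T zf = zf → ∀ k,
      ‖u (k+1) - zf‖ ^ 2 + ‖u (k+1) - u k‖ ^ 2 ≤ ‖u k - zf‖ ^ 2 := by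
    intro zf hzf k
    have h := hfirm (u k) zf
    rw [hzf, ← hu k] at h
    have heq : (u k - u (k+1)) - (zf - zf) = -(u (k+1) - u k) := by abel
    rw [heq, norm_neg] at h
    exact h
  have mono : ∀ (zf : F), T zf = zf → Antitone (fun k => ‖u k - zf‖) := by
    intro zf hzf
    apply antitone_nat_of_succ_le
    intro k
    exact norm_le_of_sq_le (norm_nonneg _) (norm_nonneg _)
      (by nlinarith [key zf hzf k, norm_nonneg (u (k+1) - u k)])
  have hsum : ∀ N, (∑ k ∈ Finset.range N, ‖u (k+1) - u k‖ ^ 2) + ‖u N - zs‖ ^ 2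
      ≤ ‖u 0 - zs‖ ^ 2 := by
    intro N
    induction N with
    | zero => simp
    | succ N ih =>
      rw [Finset.sum_range_succ]
      have h := key zs hzs N
      linarith
  have hsummable : Summable (fun k => ‖u (k+1) - u k‖ ^ 2) := by
    apply summable_of_sum_range_le (c := ‖u 0 - zs‖ ^ 2) (fun k => by positivity)
    intro N
    have h := hsum N
    nlinarith [norm_nonneg (u N - zs)]
  have hdiff : Tendsto (fun k => ‖u (k+1) - u k‖) atTop (nhds 0) := by
    have h2 := hsummable.tendsto_atTop_zero
    have heq : (fun k => ‖u (k+1) - u k‖) = fun k => Real.sqrt (‖u (k+1) - u k‖ ^ 2) := by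
      funext k; rw [Real.sqrt_sq (norm_nonneg _)]
    have h3 := h2.sqrt
    rw [Real.sqrt_zero] at h3
    rw [heq]
    exact h3
  have hbdd : ∀ k, u k ∈ Metric.closedBall zs (‖u 0 - zs‖) := by
    intro k
    rw [Metric.mem_closedBall, dist_eq_norm]
    exact mono zs hzs (Nat.zero_le k)
  obtain ⟨c, -, φ, hφ, hconv⟩ := tendsto_subseq_of_bounded Metric.isBounded_closedBall hbdd
  have hTc : T c = c := by
    have h1 : Tendsto (fun j => u (φ j + 1)) atTop (nhds (T c)) := by
      have heq : (fun j => u (φ j + 1)) = T ∘ (u ∘ φ) := by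
        funext j; simp [Function.comp, hu]
      rw [heq]
      exact (hT.tendsto c).comp hconv
    have h2 : Tendsto (fun j => u (φ j + 1)) atTop (nhds c) := by
      have hd : Tendsto (fun j => ‖u (φ j + 1) - u (φ j)‖) atTop (nhds 0) :=
        hdiff.comp hφ.tendsto_atTop
      have hd0 : Tendsto (fun j => u (φ j + 1) - u (φ j)) atTop (nhds 0) := by
        rw [tendsto_zero_iff_norm_tendsto_zero]
        exact hd
      have h3 := hd0.add hconv
      simp only [Function.comp] at h3 ⊢
      simpa using h3
    exact tendsto_nhds_unique h1 h2
  refine ⟨c, hTc, ?_⟩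
  have hanti := mono c hTc
  have hbdd2 : BddBelow (Set.range fun k => ‖u k - c‖) :=
    ⟨0, fun x ⟨k, hk⟩ => hk ▸ norm_nonneg _⟩
  have hlim := tendsto_atTop_ciInf hanti hbdd2
  have hsub : Tendsto (fun j => ‖u (φ j) - c‖) atTop (nhds 0) := by
    have h := (tendsto_iff_dist_tendsto_zero).mp hconv
    simpa [Function.comp, dist_eq_norm] using h
  have hsub2 : Tendsto (fun j => ‖u (φ j) - c‖) atTop (nhds (⨅ k, ‖u k - c‖)) :=
    hlim.comp hφ.tendsto_atTop
  have hiInf : (⨅ k, ‖u k - c‖) = 0 := tendsto_nhds_unique hsub2 hsub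
  rw [tendsto_iff_dist_tendsto_zero]
  simp only [dist_eq_norm]
  rw [← hiInf]
  exact hlim

end fejer

-- ===================== end auxiliary development =====================

end QADMM

namespace QADMM

set_option maxHeartbeats 2000000 in
/-- asymptotic convergence of the exact classical ADMM iteration: the dual
objective gap and the dual feasibility residual both tend to `0`. -/
theorem admm_asymptotic_convergence {n m : ℕ}
    (A : Fin m → Matrix (Fin n) (Fin n) ℝ) (hA : ∀ i, (A i).IsSymm)
    (C : Matrix (Fin n) (Fin n) ℝ) (hC : C.IsSymm) (b : Fin m → ℝ)
    (hAAt : IsUnit (AAt A))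
    (projPSD : Matrix (Fin n) (Fin n) ℝ → Matrix (Fin n) (Fin n) ℝ)
    (hproj : IsProjPSD projPSD)
    (γ : ℝ) (hγ : 0 < γ)
    (Xs : Matrix (Fin n) (Fin n) ℝ) (ys : Fin m → ℝ) (Ss : Matrix (Fin n) (Fin n) ℝ)
    (hopt : OptCond A C b Xs ys Ss)
    (X : ℕ → Matrix (Fin n) (Fin n) ℝ) (y : ℕ → Fin m → ℝ)
    (S : ℕ → Matrix (Fin n) (Fin n) ℝ)
    (hX0 : (X 0).IsSymm) (hS0 : (S 0).IsSymm)
    (hseq : ADMMSeq A C b projPSD γ X y S) :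
    Filter.Tendsto (fun k => -(b ⬝ᵥ y k) + b ⬝ᵥ ys) Filter.atTop (nhds 0) ∧
    Filter.Tendsto (fun k => frob (Aadj A (y k) + S k - C)) Filter.atTop (nhds 0) := by
  classical
  obtain ⟨hb, hXs, hdual, hSs, hcomp⟩ := hopt
  have hγ' : γ ≠ 0 := ne_of_gt hγ
  -- symmetry of the iterates
  have hsymm : ∀ k, (S k).IsSymm ∧ (X k).IsSymm := by
    intro k
    induction k with
    | zero => exact ⟨hS0, hX0⟩
    | succ k ih =>
      have hSk : (S (k+1)).IsSymm := by
        rw [(hseq k).2.1]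
        have h := (hproj (C - Aadj A (y (k + 1)) - γ • X k)).1.1
        unfold Matrix.IsSymm
        rw [← Matrix.conjTranspose_eq_transpose_of_trivial]
        exact h
      refine ⟨hSk, ?_⟩
      rw [(hseq k).2.2]
      unfold Matrix.IsSymm
      rw [Matrix.transpose_add, Matrix.transpose_smul, Matrix.transpose_sub,
        Matrix.transpose_add, (Aadj_isSymm hA (y (k+1))).eq, hSk.eq, hC.eq, ih.2.eq]
  -- basic recurrences
  have hXup : ∀ k, γ • X (k+1) = γ • X k + (Aadj A (y (k+1)) + S (k+1) - C) := by
    intro k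
    rw [(hseq k).2.2, smul_add, smul_smul, mul_inv_cancel₀ hγ', one_smul]
  have hZeq : ∀ k, S (k+1) - γ • X (k+1) = C - Aadj A (y (k+1)) - γ • X k := by
    intro k
    rw [hXup k]; abel
  have hSp : ∀ k, S (k+1) = projPSD (S (k+1) - γ • X (k+1)) := by
    intro k
    rw [hZeq k]
    exact (hseq k).2.1
  -- pass to Euclidean space
  set u : ℕ → Emat n := fun k => em (S (k+1) - γ • X (k+1)) with hu_def
  have hpu : ∀ k, pE projPSD (u k) = em (S (k+1)) := by
    intro k
    show em (projPSD (em.symm (em (S (k+1) - γ • X (k+1))))) = em (S (k+1))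
    rw [LinearEquiv.symm_apply_apply, ← hSp k]
  have hXu : ∀ k, em (γ • X (k+1)) = pE projPSD (u k) - u k := by
    intro k
    rw [hpu k, hu_def]
    simp only [map_sub]
    abel
  have hMu : ∀ k, em (S (k+1) + γ • X (k+1)) = 2 • pE projPSD (u k) - u k := by
    intro k
    rw [map_add, show em (S (k+1)) = pE projPSD (u k) from (hpu k).symm, hXu k, two_smul]
    abel
  set d : Emat n := em (γ • Aadj A ((AAt A)⁻¹ *ᵥ b)) with hd_def
  set c1 : Emat n := em C - qE A (em C) - d with hc1_def
  set Tm : Emat n → Emat n :=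
    fun x => x - pE projPSD x + qE A (2 • pE projPSD x - x) + c1 with hTm_def
  have hqem : ∀ M : Matrix (Fin n) (Fin n) ℝ,
      qE A (em M) = em (Aadj A ((AAt A)⁻¹ *ᵥ Amap A M)) := by
    intro M
    show em (Aadj A ((AAt A)⁻¹ *ᵥ Amap A (em.symm (em M)))) = _
    rw [LinearEquiv.symm_apply_apply]
  have hyu : ∀ k, em (Aadj A (y (k+2)))
      = qE A (em C) + d - qE A (2 • pE projPSD (u k) - u k) := by
    intro k
    rw [(hseq (k+1)).1, ← hMu k, hqem, hqem]
    have hveq : γ • (Amap A (X (k+1)) - b) + Amap A (S (k+1) - C)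
        = Amap A (S (k+1) + γ • X (k+1)) - Amap A C - γ • b := by
      rw [Amap_sub, Amap_add, Amap_smul]
      module
    rw [hveq]
    have hw : -((AAt A)⁻¹ *ᵥ (Amap A (S (k+1) + γ • X (k+1)) - Amap A C - γ • b))
        = (AAt A)⁻¹ *ᵥ Amap A C + γ • ((AAt A)⁻¹ *ᵥ b)
          - (AAt A)⁻¹ *ᵥ Amap A (S (k+1) + γ • X (k+1)) := by
      rw [Matrix.mulVec_sub, Matrix.mulVec_sub, Matrix.mulVec_smul]
      module
    rw [hw, Aadj_sub, Aadj_add, Aadj_smul, map_sub, map_add, LinearEquiv.map_smul, hd_def,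
      LinearEquiv.map_smul]
  have hustep : ∀ k, u (k+1) = Tm (u k) := by
    intro k
    have h1 : u (k+1) = em (C - Aadj A (y (k+2)) - γ • X (k+1)) := congrArg em (hZeq (k+1))
    rw [h1, map_sub, map_sub, hyu k, hXu k]
    simp only [hTm_def, hc1_def]
    abel
  -- firm nonexpansiveness and continuity of the iteration map
  have hrefl := refl_nonexp_of_firm (pE projPSD) (pE_firm hproj)
  have hfirmT : ∀ z w : Emat n,
      ‖Tm z - Tm w‖ ^ 2 + ‖(z - Tm z) - (w - Tm w)‖ ^ 2 ≤ ‖z - w‖ ^ 2 := by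
    intro z w
    exact Tmap_firm (pE projPSD) hrefl (qE A) (qE_norm_refl hAAt) c1 z w
  have hqcont : Continuous (qE A (n := n)) := (qE A).continuous_of_finiteDimensional
  have hpcont := pE_continuous hproj
  have hTmcont : Continuous Tm := by
    simp only [hTm_def]
    exact ((continuous_id.sub hpcont).add
      (hqcont.comp ((hpcont.const_smul 2).sub continuous_id))).add continuous_const
  -- the fixed point coming from the optimality conditions
  set zsE : Emat n := em (Ss - γ • Xs) with hzsE_def
  have hSsXs : minner Ss Xs = 0 := by
    rw [minner, psd_transpose_eq hSs, Matrix.trace_mul_comm, hcomp, Matrix.trace_zero]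
  have hXsSs : minner Xs Ss = 0 := by rw [minner_comm]; exact hSsXs
  have hpzs : pE projPSD zsE = em Ss := by
    apply pE_eq_of_VI hproj
    · simpa using hSs
    · intro w hw
      have h1 : zsE - em Ss = em (-(γ • Xs)) := by
        rw [hzsE_def, ← map_sub]
        congr 1
        abel
      rw [h1, em_inner']
      have hws : em.symm (w - em Ss) = em.symm w - Ss := by simp [map_sub]
      rw [hws]
      have h4 : minner (-(γ • Xs)) (em.symm w - Ss) = -γ * minner Xs (em.symm w - Ss) := by
        rw [← neg_smul, minner_comm, minner_smul, minner_comm]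
      rw [h4]
      have h5 : 0 ≤ minner Xs (em.symm w - Ss) := by
        rw [minner_sub, hXsSs, sub_zero]
        exact minner_nonneg hXs hw
      nlinarith
  have hCS : em C - em Ss = em (Aadj A ys) := by
    rw [← map_sub]
    congr 1
    rw [← hdual]; abel
  have hqCS : qE A (em C) - qE A (em Ss) = em C - em Ss := by
    rw [← map_sub, hCS, qE_fix hAAt, ← hCS]
  have hqXs : qE A (em (γ • Xs)) = d := by
    rw [hqem, hd_def]
    congr 1
    rw [Amap_smul, Matrix.mulVec_smul, Aadj_smul, hb]
  have hTfix : Tm zsE = zsE := by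
    show zsE - pE projPSD zsE + qE A (2 • pE projPSD zsE - zsE) + c1 = zsE
    rw [hpzs]
    have h2 : (2:ℕ) • em Ss - zsE = em Ss + em (γ • Xs) := by
      rw [hzsE_def, map_sub, two_smul]; abel
    rw [h2, map_add, hqXs, hc1_def]
    have h4 : zsE - em Ss + (qE A (em Ss) + d) + (em C - qE A (em C) - d) - zsE
        = (em C - em Ss) - (qE A (em C) - qE A (em Ss)) := by abel
    have h5 : zsE - em Ss + (qE A (em Ss) + d) + (em C - qE A (em C) - d) - zsE = 0 := by
      rw [h4, hqCS, sub_self]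
    exact sub_eq_zero.mp h5
  -- Fejér convergence
  obtain ⟨chat, hchatfix, hconv⟩ := fejer Tm hTmcont hfirmT zsE hTfix u hustep
  -- the limit is a symmetric matrix
  have husym : ∀ k, (em.symm (u k))ᵀ = em.symm (u k) := by
    intro k
    show (em.symm (em (S (k+1) - γ • X (k+1))))ᵀ = em.symm (em (S (k+1) - γ • X (k+1)))
    rw [LinearEquiv.symm_apply_apply, Matrix.transpose_sub, Matrix.transpose_smul,
      (hsymm (k+1)).1.eq, (hsymm (k+1)).2.eq]
  have hchatsym : (em.symm chat)ᵀ = em.symm chat := by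
    let tE : Emat n →ₗ[ℝ] Emat n :=
      { toFun := fun x => em ((em.symm x)ᵀ)
        map_add' := fun x y => by simp [map_add, Matrix.transpose_add]
        map_smul' := fun c x => by simp [Matrix.transpose_smul] }
    have htEu : ∀ k, tE (u k) = u k := by
      intro k
      show em ((em.symm (u k))ᵀ) = u k
      rw [husym k]
      simp
    have h1 : Filter.Tendsto (fun k => tE (u k)) Filter.atTop (nhds (tE chat)) :=
      (tE.continuous_of_finiteDimensional.tendsto chat).comp hconv
    have h2 : Filter.Tendsto (fun k => tE (u k)) Filter.atTop (nhds chat) := by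
      simp only [htEu]; exact hconv
    have h3 : tE chat = chat := tendsto_nhds_unique h1 h2
    have h3' : em ((em.symm chat)ᵀ) = chat := h3
    have h4 := congrArg em.symm h3'
    simpa using h4
  -- limit objects
  set Shat : Matrix (Fin n) (Fin n) ℝ := em.symm (pE projPSD chat) with hShat_def
  set Xhat : Matrix (Fin n) (Fin n) ℝ := γ⁻¹ • em.symm (pE projPSD chat - chat) with hXhat_def
  have hShat_psd : Shat.PosSemidef := pE_psd hproj chat
  have hpchat : pE projPSD chat = em Shat := by rw [hShat_def]; simp
  have hgXhat : em (γ • Xhat) = pE projPSD chat - chat := by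
    rw [hXhat_def, smul_smul, mul_inv_cancel₀ hγ', one_smul]
    simp
  have hMhat : em (Shat + γ • Xhat) = 2 • pE projPSD chat - chat := by
    rw [map_add, hgXhat, ← hpchat, two_smul]
    abel
  set yhat : Fin m → ℝ := (AAt A)⁻¹ *ᵥ (γ • b + Amap A (C - (Shat + γ • Xhat))) with hyhat_def
  set Phi : Emat n → (Fin m → ℝ) :=
    fun x => (AAt A)⁻¹ *ᵥ (γ • b + Amap A (C - em.symm (2 • pE projPSD x - x))) with hPhi_def
  have hyhat_eq : Phi chat = yhat := by
    simp only [hPhi_def, hyhat_def, ← hMhat]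
    rw [LinearEquiv.symm_apply_apply]
  have hyPhi : ∀ k, y (k+2) = Phi (u k) := by
    intro k
    rw [(hseq (k+1)).1]
    have h1 : em.symm (2 • pE projPSD (u k) - u k) = S (k+1) + γ • X (k+1) := by
      rw [← hMu k]; simp
    simp only [hPhi_def, h1]
    have h2 : -(γ • (Amap A (X (k+1)) - b) + Amap A (S (k+1) - C))
        = γ • b + Amap A (C - (S (k+1) + γ • X (k+1))) := by
      rw [Amap_sub, Amap_sub, Amap_add, Amap_smul]
      module
    rw [← Matrix.mulVec_neg, h2]
  have hPhicont : Continuous Phi := by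
    have hLF : Continuous (fun x : Emat n => (AAt A)⁻¹ *ᵥ Amap A (em.symm x)) := by
      have : IsLinearMap ℝ (fun x : Emat n => (AAt A)⁻¹ *ᵥ Amap A (em.symm x)) := by
        constructor
        · intro a c; rw [map_add, Amap_add, Matrix.mulVec_add]
        · intro t a; rw [LinearEquiv.map_smul, Amap_smul, Matrix.mulVec_smul]
      exact (IsLinearMap.mk' _ this).continuous_of_finiteDimensional
    have heq : Phi = fun x => ((AAt A)⁻¹ *ᵥ (γ • b) + (AAt A)⁻¹ *ᵥ Amap A C)
        - (AAt A)⁻¹ *ᵥ Amap A (em.symm (2 • pE projPSD x - x)) := by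
      funext x
      simp only [hPhi_def]
      rw [Amap_sub, Matrix.mulVec_add, Matrix.mulVec_sub]
      abel
    rw [heq]
    exact continuous_const.sub
      (hLF.comp ((hpcont.const_smul 2).sub continuous_id))
  -- KKT conditions for the limit point
  have hqfix : qE A (2 • pE projPSD chat - chat) = pE projPSD chat - c1 := by
    have h := hchatfix
    simp only [hTm_def] at h
    have h2 : chat - pE projPSD chat + qE A (2 • pE projPSD chat - chat) + c1 - chat = 0 := by
      rw [h, sub_self]
    have h3 : qE A (2 • pE projPSD chat - chat) - (pE projPSD chat - c1)
        = chat - pE projPSD chat + qE A (2 • pE projPSD chat - chat) + c1 - chat := by abel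
    exact sub_eq_zero.mp (h3.trans h2)
  have hAadjyhat : em (Aadj A yhat) = em C - pE projPSD chat := by
    rw [hyhat_def]
    have h1 : (AAt A)⁻¹ *ᵥ (γ • b + Amap A (C - (Shat + γ • Xhat)))
        = γ • ((AAt A)⁻¹ *ᵥ b) + ((AAt A)⁻¹ *ᵥ Amap A C
          - (AAt A)⁻¹ *ᵥ Amap A (Shat + γ • Xhat)) := by
      rw [Amap_sub, Matrix.mulVec_add, Matrix.mulVec_sub, Matrix.mulVec_smul]
    rw [h1, Aadj_add, Aadj_smul, Aadj_sub, map_add, LinearEquiv.map_smul, map_sub]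
    have h2 : em (Aadj A ((AAt A)⁻¹ *ᵥ Amap A C)) = qE A (em C) := (hqem C).symm
    have h3 : em (Aadj A ((AAt A)⁻¹ *ᵥ Amap A (Shat + γ • Xhat)))
        = qE A (2 • pE projPSD chat - chat) := by
      rw [← hqem, hMhat]
    rw [h2, h3, hqfix, hc1_def]
    have h4 : γ • em (Aadj A ((AAt A)⁻¹ *ᵥ b)) = d := by
      rw [hd_def, LinearEquiv.map_smul]
    rw [h4]
    abel
  have hShat_eq : C - Shat = Aadj A yhat := by
    have h1 := congrArg em.symm hAadjyhat
    rw [LinearEquiv.symm_apply_apply, map_sub, LinearEquiv.symm_apply_apply, ← hShat_def] at h1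
    exact h1.symm
  have hAmapXhat : Amap A Xhat = b := by
    have h1 : Amap A (Aadj A yhat) = Amap A C - Amap A Shat := by
      rw [← hShat_eq, Amap_sub]
    rw [Amap_Aadj, hyhat_def, AAt_mulVec_inv hAAt] at h1
    rw [Amap_sub, Amap_add, Amap_smul] at h1
    have h3 : γ • b - γ • Amap A Xhat = 0 := by
      have h4 : γ • b - γ • Amap A Xhat
          = (γ • b + (Amap A C - (Amap A Shat + γ • Amap A Xhat)))
            - (Amap A C - Amap A Shat) := by abel
      rw [h4, h1, sub_self]
    have h5 : γ • (b - Amap A Xhat) = 0 := by rw [smul_sub]; exact h3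
    rcases smul_eq_zero.mp h5 with h6 | h6
    · exact absurd h6 hγ'
    · exact (sub_eq_zero.mp h6).symm
  -- complementarity-type facts at the limit
  have hVI' : ∀ W' : Matrix (Fin n) (Fin n) ℝ, W'.PosSemidef →
      0 ≤ minner Xhat (W' - Shat) := by
    intro W' hW'
    have hw := pE_VI hproj chat (em W') (by simpa using hW')
    have h1 : chat - pE projPSD chat = em (-(γ • Xhat)) := by
      rw [map_neg, hgXhat]
      abel
    rw [h1, hpchat, ← map_sub, em_inner] at hw
    have h4 : minner (-(γ • Xhat)) (W' - Shat) = -γ * minner Xhat (W' - Shat) := by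
      rw [← neg_smul, minner_comm, minner_smul, minner_comm]
    rw [h4] at hw
    nlinarith
  have hXhatW : ∀ W : Matrix (Fin n) (Fin n) ℝ, W.PosSemidef → 0 ≤ minner Xhat W := by
    intro W hW
    have h := hVI' (W + Shat) (hW.add hShat_psd)
    rwa [add_sub_cancel_right] at h
  have minner_zero_right : ∀ M : Matrix (Fin n) (Fin n) ℝ, minner M 0 = 0 := by
    intro M; simp [minner]
  have hXhatShat : minner Xhat Shat = 0 := by
    have h1 := hVI' 0 Matrix.PosSemidef.zero
    have h2 := hVI' (Shat + Shat) (hShat_psd.add hShat_psd)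
    have minner_neg_right : ∀ M N : Matrix (Fin n) (Fin n) ℝ, minner M (-N) = -minner M N := by
      intro M N; simp [minner, Matrix.mul_neg]
    rw [zero_sub, minner_neg_right] at h1
    rw [add_sub_cancel_right] at h2
    linarith
  have hXhatSym : Xhat.IsSymm := by
    unfold Matrix.IsSymm
    rw [hXhat_def, Matrix.transpose_smul]
    congr 1
    rw [map_sub, Matrix.transpose_sub, hchatsym, ← hShat_def, psd_transpose_eq hShat_psd]
  have hXhat_psd : Xhat.PosSemidef := psd_of_symm_dual hXhatSym hXhatW
  -- dual objective values agree
  have hCS' : C - Ss = Aadj A ys := by rw [← hdual]; abel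
  have hbdot : ∀ (Z : Matrix (Fin n) (Fin n) ℝ) (v : Fin m → ℝ),
      Amap A Z ⬝ᵥ v = minner (Aadj A v) Z := by
    intro Z v
    rw [minner_Aadj, dotProduct_comm]
  have e1 : b ⬝ᵥ yhat = minner Xs C - minner Xs Shat := by
    rw [← hb, hbdot, ← hShat_eq, minner_comm, minner_sub]
  have e2 : b ⬝ᵥ ys = minner Xs C := by
    rw [← hb, hbdot, ← hCS', minner_comm, minner_sub, hXsSs, sub_zero]
  have e3 : b ⬝ᵥ yhat = minner Xhat C := by
    rw [← hAmapXhat, hbdot, ← hShat_eq, minner_comm, minner_sub, hXhatShat, sub_zero]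
  have e4 : b ⬝ᵥ ys = minner Xhat C - minner Xhat Ss := by
    rw [← hAmapXhat, hbdot, ← hCS', minner_comm, minner_sub]
  have hobj : b ⬝ᵥ yhat = b ⬝ᵥ ys := by
    have n1 : 0 ≤ minner Xs Shat := minner_nonneg hXs hShat_psd
    have n2 : 0 ≤ minner Xhat Ss := minner_nonneg hXhat_psd hSs
    linarith
  -- conclusions
  constructor
  · apply (Filter.tendsto_add_atTop_iff_nat 2).mp
    show Filter.Tendsto (fun k : ℕ => -(b ⬝ᵥ y (k + 2)) + b ⬝ᵥ ys) Filter.atTop (nhds 0)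
    have hdc : Continuous (fun v : Fin m → ℝ => b ⬝ᵥ v) := by
      unfold dotProduct
      exact continuous_finset_sum _ (fun i _ => continuous_const.mul (continuous_apply i))
    have h1 : Filter.Tendsto (fun k => Phi (u k)) Filter.atTop (nhds yhat) := by
      rw [← hyhat_eq]
      exact (hPhicont.tendsto chat).comp hconv
    have h2 : Filter.Tendsto (fun k => -(b ⬝ᵥ Phi (u k)) + b ⬝ᵥ ys) Filter.atTop
        (nhds (-(b ⬝ᵥ yhat) + b ⬝ᵥ ys)) :=
      (((hdc.tendsto yhat).comp h1).neg).add tendsto_const_nhds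
    have h3 : -(b ⬝ᵥ yhat) + b ⬝ᵥ ys = 0 := by rw [hobj]; ring
    rw [h3] at h2
    have h4 : (fun k : ℕ => -(b ⬝ᵥ y (k + 2)) + b ⬝ᵥ ys)
        = fun k => -(b ⬝ᵥ Phi (u k)) + b ⬝ᵥ ys := by
      funext k; rw [hyPhi k]
    exact h4 ▸ h2
  · apply (Filter.tendsto_add_atTop_iff_nat 2).mp
    show Filter.Tendsto (fun k : ℕ => frob (Aadj A (y (k + 2)) + S (k + 2) - C)) Filter.atTop (nhds 0)
    have hres : ∀ k, em (Aadj A (y (k + 2)) + S (k + 2) - C)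
        = (pE projPSD (u (k+1)) - u (k+1)) - (pE projPSD (u k) - u k) := by
      intro k
      have h1 : Aadj A (y (k+2)) + S (k+2) - C = γ • X (k+2) - γ • X (k+1) := by
        rw [hXup (k+1)]
        abel
      rw [h1, map_sub, hXu (k+1), hXu k]
    have hconv1 : Filter.Tendsto (fun k => u (k+1)) Filter.atTop (nhds chat) :=
      (Filter.tendsto_add_atTop_iff_nat 1).mpr hconv
    have hg : Continuous (fun x : Emat n => pE projPSD x - x) := hpcont.sub continuous_id
    have t1 := (hg.tendsto chat).comp hconv1
    have t2 := (hg.tendsto chat).comp hconv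
    have h5 : Filter.Tendsto (fun k => (pE projPSD (u (k+1)) - u (k+1)) - (pE projPSD (u k) - u k))
        Filter.atTop (nhds 0) := by
      have h6 := t1.sub t2
      simpa [Function.comp] using h6
    have h7 : (fun k : ℕ => frob (Aadj A (y (k + 2)) + S (k + 2) - C))
        = fun k => ‖(pE projPSD (u (k+1)) - u (k+1)) - (pE projPSD (u k) - u k)‖ := by
      funext k; rw [frob_eq, hres k]
    rw [h7]
    simpa [Function.comp_def] using (continuous_norm.tendsto (0 : Emat n)).comp h5


end QADMM
end
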